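/- arXiv:2110.13669 — 4 statements merged into one kernel-verified Lean document; each statement's English description precedes it below -/
import Mathlib

section
/- Let X be a metric space, A a compact metric space, and v : X × A → ℝ lower semicontinuous and bounded. Then V(x) := inf_{u ∈ A} v(x, u) is lower semicontinuous and bounded, and there exists a Borel-measurable function μ : X → A such that V(x) = v(x, μ(x)) for every x ∈ X. -/
open Metric Set Filter Topology TopologicalSpace

section Aux
variable {A : Type*} [MetricSpace A]

/-- A lower semicontinuous real function attains its minimum on a nonempty compact set. -/
lemma lsc_exists_min {f : A → ℝ} (hf : LowerSemicontinuous f) {K : Set A}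
    (hK : IsCompact K) (hne : K.Nonempty) : ∃ a ∈ K, ∀ b ∈ K, f a ≤ f b := by
  by_contra h
  push_neg at h
  have hcover : K ⊆ ⋃ b ∈ K, {a | f b < f a} := by
    intro a ha
    obtain ⟨b, hb, hba⟩ := h a ha
    exact mem_iUnion₂.2 ⟨b, hb, hba⟩
  have hopen : ∀ b ∈ K, IsOpen {a | f b < f a} := fun b _ => hf.isOpen_preimage (f b)
  obtain ⟨T, hTK, hTfin, hTcov⟩ := hK.elim_finite_subcover_image hopen hcover
  have hTne : T.Nonempty := by
    rcases hne with ⟨a, ha⟩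
    rcases mem_iUnion₂.1 (hTcov ha) with ⟨b, hb, _⟩
    exact ⟨b, hb⟩
  obtain ⟨b₀, hb₀T, hb₀min⟩ := Set.exists_min_image T f hTfin hTne
  rcases mem_iUnion₂.1 (hTcov (hTK hb₀T)) with ⟨b, hbT, hb⟩
  have := hb₀min b hbT
  simp only [mem_setOf_eq] at hb
  linarith

/-- The infimum over a nonempty compact set of a (bounded-below) lsc function of two
variables is lsc in the other variable. -/
lemma lsc_inf {X : Type*} [TopologicalSpace X] {v : X × A → ℝ}
    (hlsc : LowerSemicontinuous v) {K : Set A} (hK : IsCompact K) (hne : K.Nonempty)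
    {cL : ℝ} (hbd : ∀ z, cL ≤ v z) :
    LowerSemicontinuous (fun x => ⨅ u : K, v (x, u)) := by
  have hbdd : ∀ x : X, BddBelow (range fun u : K => v (x, u)) := by
    intro x
    exact ⟨cL, by rintro _ ⟨u, rfl⟩; exact hbd _⟩
  intro x y hy
  obtain ⟨z, hyz, hz⟩ := exists_between hy
  have hzu : ∀ u : K, z < v (x, u) := by
    intro u
    exact lt_of_lt_of_le hz (ciInf_le (hbdd x) u)
  have key : ∀ u : K, ∃ (s : Set X) (t : Set A), IsOpen s ∧ IsOpen t ∧ x ∈ s ∧ ↑u ∈ t ∧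
      ∀ p ∈ s ×ˢ t, z < v p := by
    intro u
    have := hlsc (x, ↑u) z (hzu u)
    rw [nhds_prod_eq] at this
    obtain ⟨s, hs, t, ht, hst⟩ := Filter.mem_prod_iff.1 this
    obtain ⟨s', hs'sub, hs'o, hxs'⟩ := _root_.mem_nhds_iff.1 hs
    obtain ⟨t', ht'sub, ht'o, hut'⟩ := _root_.mem_nhds_iff.1 ht
    exact ⟨s', t', hs'o, ht'o, hxs', hut', fun p hp =>
      hst (mk_mem_prod (hs'sub hp.1) (ht'sub hp.2))⟩
  choose s t hso hto hxs hut hst using key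
  obtain ⟨T, hTcov⟩ := hK.elim_finite_subcover t hto (fun u hu => mem_iUnion.2 ⟨⟨u, hu⟩, hut _⟩)
  have hNopen : IsOpen (⋂ i ∈ T, s i) := isOpen_biInter_finset (fun i _ => hso i)
  have hxN : x ∈ ⋂ i ∈ T, s i := mem_iInter₂.2 fun i _ => hxs i
  have : Nonempty K := hne.to_subtype
  filter_upwards [hNopen.mem_nhds hxN] with x' hx'
  refine lt_of_lt_of_le hyz (le_ciInf fun u => ?_)
  obtain ⟨i, hiT, hui⟩ := mem_iUnion₂.1 (hTcov u.2)
  exact (hst i (x', ↑u) (mk_mem_prod (mem_iInter₂.1 hx' i hiT) hui)).le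

lemma iInf_univ_subtype {A : Type*} [Nonempty A] (f : A → ℝ) (c : ℝ) (h : ∀ u, c ≤ f u) :
    (⨅ u : (Set.univ : Set A), f ↑u) = ⨅ u : A, f u := by
  have h1 : BddBelow (range fun u : (Set.univ : Set A) => f ↑u) :=
    ⟨c, by rintro _ ⟨u, rfl⟩; exact h _⟩
  have h2 : BddBelow (range f) := ⟨c, by rintro _ ⟨u, rfl⟩; exact h _⟩
  exact le_antisymm (le_ciInf fun u => ciInf_le h1 ⟨u, mem_univ u⟩)
    (le_ciInf fun u => ciInf_le h2 u.1)

lemma measurable_nat_find' {X : Type*} [MeasurableSpace X] (p : ℕ → X → Prop)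
    [∀ x, DecidablePred fun k => p k x]
    (hex : ∀ x, ∃ k, p k x) (hp : ∀ k, MeasurableSet {x | p k x}) :
    Measurable fun x => Nat.find (hex x) := by
  apply measurable_to_nat
  intro y
  have heq : (fun x => Nat.find (hex x)) ⁻¹' {Nat.find (hex y)} =
      {x | p (Nat.find (hex y)) x} ∩ ⋂ j ∈ Finset.range (Nat.find (hex y)), {x | p j x}ᶜ := by
    ext x
    simp [Nat.find_eq_iff]
  rw [heq]
  exact (hp _).inter (MeasurableSet.biInter (Finset.range _).countable_toSet
    fun j _ => (hp j).compl)

end Aux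

/-- The measurable selector part. -/
lemma exists_min_selector {X A : Type*} [MetricSpace X] [MeasurableSpace X] [BorelSpace X]
    [MetricSpace A] [CompactSpace A] [Nonempty A] [MeasurableSpace A] [BorelSpace A]
    (v : X × A → ℝ) (hlsc : LowerSemicontinuous v)
    (cL : ℝ) (hbd : ∀ z, cL ≤ v z) :
    ∃ μ : X → A, Measurable μ ∧ ∀ x, (⨅ u : A, v (x, u)) = v (x, μ x) := by
  classical
  set V : X → ℝ := fun x => ⨅ u : A, v (x, u) with hVdef
  set r : ℕ → ℝ := fun n => (1/2 : ℝ)^n with hrdef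
  have hrpos : ∀ n, 0 < r n := fun n => by positivity
  have hbdd : ∀ x, BddBelow (range fun u : A => v (x, u)) :=
    fun x => ⟨cL, by rintro _ ⟨u, rfl⟩; exact hbd _⟩
  have hbddK : ∀ (x : X) (K : Set A), BddBelow (range fun u : K => v (x, ↑u)) :=
    fun x K => ⟨cL, by rintro _ ⟨u, rfl⟩; exact hbd _⟩
  have huniv : ∀ x : X, (⨅ u : (Set.univ : Set A), v (x, ↑u)) = V x :=
    fun x => iInf_univ_subtype (fun u => v (x, u)) cL (fun u => hbd _)
  have hVlsc : LowerSemicontinuous V := by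
    have h := lsc_inf hlsc isCompact_univ univ_nonempty hbd
    rwa [funext huniv] at h
  have hVmeas : Measurable V := hVlsc.measurable
  -- attainment of the infimum over any nonempty compact set
  have hattain : ∀ (x : X) (K : Set A), IsCompact K → K.Nonempty →
      ∃ u ∈ K, v (x, u) = ⨅ w : K, v (x, ↑w) := by
    intro x K hK hne
    have hf : LowerSemicontinuous (fun u : A => v (x, u)) :=
      hlsc.comp (Continuous.prodMk_right x)
    obtain ⟨u, huK, hmin⟩ := lsc_exists_min hf hK hne
    haveI := hne.to_subtype
    exact ⟨u, huK, le_antisymm (le_ciInf fun b => hmin b b.2) (ciInf_le (hbddK x K) ⟨u, huK⟩)⟩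
  have hVattain : ∀ x, ∃ u, v (x, u) = V x := by
    intro x
    obtain ⟨u, _, h⟩ := hattain x Set.univ isCompact_univ univ_nonempty
    exact ⟨u, h.trans (huniv x)⟩
  -- dense sequence
  set a : ℕ → A := TopologicalSpace.denseSeq A with hadef
  have hdense : DenseRange a := TopologicalSpace.denseRange_denseSeq A
  have hamea : Measurable a := measurable_from_top
  -- value function over closed balls
  have hWlsc : ∀ m k : ℕ,
      LowerSemicontinuous (fun x => ⨅ w : (closedBall (a k) (r m) : Set A), v (x, ↑w)) :=
    fun m k => lsc_inf hlsc (isClosed_closedBall.isCompact)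
      ⟨a k, mem_closedBall_self (hrpos m).le⟩ hbd
  have hWle : ∀ (m k : ℕ) (x : X) (u : A), u ∈ closedBall (a k) (r m) →
      (⨅ w : (closedBall (a k) (r m) : Set A), v (x, ↑w)) ≤ v (x, u) :=
    fun m k x u hu => ciInf_le (hbddK x _) ⟨u, hu⟩
  have hVle : ∀ (x : X) (u : A), V x ≤ v (x, u) := fun x u => ciInf_le (hbdd x) u
  -- base step
  have base : ∃ c : X → A, Measurable c ∧ ∀ x, ∃ u, v (x, u) = V x ∧ dist u (c x) ≤ r 0 := by
    set p : ℕ → X → Prop :=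
      fun k x => (⨅ w : (closedBall (a k) (r 0) : Set A), v (x, ↑w)) ≤ V x with hpdef
    have hex : ∀ x, ∃ k, p k x := by
      intro x
      obtain ⟨u, hu⟩ := hVattain x
      obtain ⟨k, hk⟩ := hdense.exists_dist_lt u (hrpos 0)
      exact ⟨k, (hWle 0 k x u (mem_closedBall.2 hk.le)).trans hu.le⟩
    have hpmeas : ∀ k, MeasurableSet {x | p k x} :=
      fun k => measurableSet_le ((hWlsc 0 k).measurable) hVmeas
    refine ⟨fun x => a (Nat.find (hex x)), hamea.comp (measurable_nat_find' p hex hpmeas), ?_⟩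
    intro x
    have hspec := Nat.find_spec (hex x)
    obtain ⟨u', hu'K, hu'⟩ := hattain x (closedBall (a (Nat.find (hex x))) (r 0))
      (isClosed_closedBall.isCompact) ⟨_, mem_closedBall_self (hrpos 0).le⟩
    exact ⟨u', le_antisymm (hu'.le.trans hspec) (hVle x u'), mem_closedBall.1 hu'K⟩
  -- inductive step
  have step : ∀ (n : ℕ) (c : X → A), Measurable c →
      (∀ x, ∃ u, v (x, u) = V x ∧ dist u (c x) ≤ r n) →
      ∃ c' : X → A, Measurable c' ∧ (∀ x, ∃ u, v (x, u) = V x ∧ dist u (c' x) ≤ r (n+1)) ∧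
        ∀ x, dist (c x) (c' x) ≤ r n + r (n+1) := by
    intro n c hc hcinv
    set p : ℕ → X → Prop := fun k x =>
      (⨅ w : (closedBall (a k) (r (n+1)) : Set A), v (x, ↑w)) ≤ V x ∧
        dist (c x) (a k) < r n + r (n+1) with hpdef
    have hex : ∀ x, ∃ k, p k x := by
      intro x
      obtain ⟨u, huv, hud⟩ := hcinv x
      obtain ⟨k, hk⟩ := hdense.exists_dist_lt u (hrpos (n+1))
      refine ⟨k, (hWle (n+1) k x u (mem_closedBall.2 hk.le)).trans huv.le, ?_⟩
      have h1 : dist (c x) u ≤ r n := by rw [dist_comm]; exact hud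
      calc dist (c x) (a k) ≤ dist (c x) u + dist u (a k) := dist_triangle _ _ _
        _ < r n + r (n+1) := by linarith
    have hpmeas : ∀ k, MeasurableSet {x | p k x} := by
      intro k
      have h1 := measurableSet_le ((hWlsc (n+1) k).measurable) hVmeas
      have h2 : MeasurableSet {x | dist (c x) (a k) < r n + r (n+1)} :=
        hc measurableSet_ball
      exact h1.inter h2
    refine ⟨fun x => a (Nat.find (hex x)), hamea.comp (measurable_nat_find' p hex hpmeas), ?_, ?_⟩
    · intro x
      have hspec := Nat.find_spec (hex x)
      obtain ⟨u', hu'K, hu'⟩ := hattain x (closedBall (a (Nat.find (hex x))) (r (n+1)))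
        (isClosed_closedBall.isCompact) ⟨_, mem_closedBall_self (hrpos (n+1)).le⟩
      exact ⟨u', le_antisymm (hu'.le.trans hspec.1) (hVle x u'), mem_closedBall.1 hu'K⟩
    · intro x
      exact (Nat.find_spec (hex x)).2.le
  -- construct the sequence of approximations
  choose! F hF1 hF2 hF3 using step
  obtain ⟨cb, hcb1, hcb2⟩ := base
  obtain ⟨c, hc0, hcs⟩ : ∃ c : ℕ → X → A, c 0 = cb ∧ ∀ n, c (n+1) = F n (c n) :=
    ⟨fun n => Nat.rec cb (fun m cm => F m cm) n, rfl, fun n => rfl⟩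
  have hinv : ∀ n, Measurable (c n) ∧ ∀ x, ∃ u, v (x, u) = V x ∧ dist u (c n x) ≤ r n := by
    intro n
    induction n with
    | zero => rw [hc0]; exact ⟨hcb1, hcb2⟩
    | succ n ih =>
        rw [hcs]
        exact ⟨hF1 n (c n) ih.1 ih.2, hF2 n (c n) ih.1 ih.2⟩
  have hdist : ∀ n x, dist (c n x) (c (n+1) x) ≤ r n + r (n+1) := by
    intro n x
    rw [hcs]
    exact hF3 n (c n) (hinv n).1 (hinv n).2 x
  -- Cauchy and limit
  have hcauchy : ∀ x, CauchySeq (fun n => c n x) := by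
    intro x
    apply cauchySeq_of_le_geometric (1/2) 2 (by norm_num)
    intro n
    have h1 := hdist n x
    have h2 : r (n+1) ≤ r n := by
      rw [hrdef]
      simp only []
      rw [pow_succ]
      nlinarith [hrpos n]
    have : r n + r (n+1) ≤ 2 * (1/2)^n := by
      have : r n = (1/2:ℝ)^n := rfl
      nlinarith [hrpos n, hrpos (n+1)]
    linarith
  have hconv : ∀ x, ∃ l, Tendsto (fun n => c n x) atTop (𝓝 l) :=
    fun x => cauchySeq_tendsto_of_complete (hcauchy x)
  choose μ hμ using hconv
  refine ⟨μ, ?_, ?_⟩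
  · exact measurable_of_tendsto_metrizable (fun n => (hinv n).1) (tendsto_pi_nhds.2 hμ)
  · intro x
    choose u hu1 hu2 using fun n => (hinv n).2 x
    have hulim : Tendsto u atTop (𝓝 (μ x)) := by
      rw [tendsto_iff_dist_tendsto_zero]
      apply squeeze_zero (g := fun n => r n + dist (c n x) (μ x)) (fun n => dist_nonneg)
      · intro n
        calc dist (u n) (μ x) ≤ dist (u n) (c n x) + dist (c n x) (μ x) := dist_triangle _ _ _
          _ ≤ r n + dist (c n x) (μ x) := add_le_add_left (hu2 n) _
      · have h1 : Tendsto r atTop (𝓝 0) :=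
          tendsto_pow_atTop_nhds_zero_of_lt_one (by norm_num) (by norm_num)
        have h2 := tendsto_iff_dist_tendsto_zero.1 (hμ x)
        simpa using h1.add h2
    refine le_antisymm (hVle x (μ x)) ?_
    by_contra hgt
    push_neg at hgt
    have hflsc : LowerSemicontinuousAt (fun w : A => v (x, w)) (μ x) :=
      (hlsc.comp (Continuous.prodMk_right x)).lowerSemicontinuousAt _
    have hev := hulim.eventually (hflsc (V x) hgt)
    obtain ⟨n, hn⟩ := hev.exists
    exact lt_irrefl (V x) (by simpa [hu1 n] using hn)

/-- Measurable selection for minimization of a bounded lsc function over a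
compact action space (Bertsekas–Shreve Prop. 7.33). -/
theorem stmt10 {X A : Type*} [MetricSpace X] [MeasurableSpace X] [BorelSpace X]
    [MetricSpace A] [CompactSpace A] [Nonempty A]
    [MeasurableSpace A] [BorelSpace A]
    (v : X × A → ℝ) (hlsc : LowerSemicontinuous v)
    (cL cU : ℝ) (hbd : ∀ z, cL ≤ v z ∧ v z ≤ cU) :
    LowerSemicontinuous (fun x => ⨅ u : A, v (x, u)) ∧
    (∀ x, cL ≤ (⨅ u : A, v (x, u)) ∧ (⨅ u : A, v (x, u)) ≤ cU) ∧
    ∃ μ : X → A, Measurable μ ∧ ∀ x, (⨅ u : A, v (x, u)) = v (x, μ x) := by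
  have hbdL : ∀ z, cL ≤ v z := fun z => (hbd z).1
  have hbdd : ∀ x, BddBelow (Set.range fun u : A => v (x, u)) :=
    fun x => ⟨cL, by rintro _ ⟨u, rfl⟩; exact hbdL _⟩
  refine ⟨?_, ?_, exists_min_selector v hlsc cL hbdL⟩
  · have h := lsc_inf hlsc isCompact_univ Set.univ_nonempty hbdL
    have huniv : ∀ x : X, (⨅ u : (Set.univ : Set A), v (x, ↑u)) = ⨅ u : A, v (x, u) :=
      fun x => iInf_univ_subtype (fun u => v (x, u)) cL (fun u => hbdL _)
    rwa [funext huniv] at h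
  · intro x
    exact ⟨le_ciInf fun u => hbdL _,
      (ciInf_le (hbdd x) (Classical.arbitrary A)).trans (hbd _).2⟩
end

section
/- Let S be a metric space, A a compact metric space, f : S × A × ℝᵈ → S continuous, c : S × A → ℝ bounded and lower semicontinuous, p(dw|x,u) a continuous stochastic kernel on ℝᵈ given S × A, θ < 0, and V' : S → ℝ lower semicontinuous and bounded. Define ψ(x,u) := (−2/θ)·log ∫_{ℝᵈ} exp( (−θ/2)·V'(f(x,u,w)) ) p(dw|x,u) and v(x,u) := c(x,u) + ψ(x,u). Then v is lower semicontinuous and bounded on S × A, the value function V(x) := inf_{u∈A} v(x,u) is lower semicontinuous and bounded on S, and there exists a Borel-measurable μ : S → A such that V(x) = v(x, μ(x)) for all x ∈ S. -/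
open MeasureTheory


open MeasureTheory Filter Topology

lemma measurable_nat_sInf {X : Type*} [MeasurableSpace X] {q : ℕ → X → Prop}
    (hq : ∀ n, MeasurableSet {x | q n x}) :
    Measurable (fun x => sInf {n | q n x}) := by
  apply measurable_to_countable'
  intro n
  have : (fun x => sInf {n | q n x}) ⁻¹' {n} =
      (({x | q n x} ∩ ⋂ k < n, {x | q k x}ᶜ) ∪
        (if n = 0 then {x | ∀ k, ¬ q k x} else ∅)) := by
    ext x
    simp only [Set.mem_preimage, Set.mem_singleton_iff, Set.mem_union, Set.mem_inter_iff,
      Set.mem_iInter, Set.mem_compl_iff, Set.mem_setOf_eq]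
    constructor
    · intro h
      by_cases hne : {k | q k x}.Nonempty
      · left
        refine ⟨h ▸ Nat.sInf_mem hne, fun k hk => ?_⟩
        exact Nat.notMem_of_lt_sInf (h ▸ hk)
      · right
        have hempty : {k | q k x} = ∅ := Set.not_nonempty_iff_eq_empty.mp hne
        have : n = 0 := by rw [← h, hempty, Nat.sInf_empty]
        simp [this]
        intro k hk
        exact hne ⟨k, hk⟩
    · rintro (⟨hn, hlt⟩ | h)
      · refine le_antisymm (Nat.sInf_le hn) ?_
        by_contra hcon
        push_neg at hcon
        have := Nat.sInf_mem (⟨n, hn⟩ : {k | q k x}.Nonempty)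
        exact hlt _ hcon this
      · rcases Nat.eq_zero_or_pos n with h0 | h0
        · subst h0
          simp only [if_pos rfl, Set.mem_setOf_eq] at h
          have : {k | q k x} = ∅ := by
            ext k; simp [h k]
          rw [this, Nat.sInf_empty]
        · exfalso
          simp [Nat.pos_iff_ne_zero.mp h0] at h
  rw [this]
  apply MeasurableSet.union
  · exact (hq n).inter (MeasurableSet.iInter fun k => MeasurableSet.iInter fun _ => (hq k).compl)
  · split
    · have : {x | ∀ k, ¬ q k x} = ⋂ k, {x | q k x}ᶜ := by ext x; simp
      rw [this]
      exact MeasurableSet.iInter fun k => (hq k).compl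
    · exact MeasurableSet.empty

lemma measurable_argmin_selector {X A : Type*} [MeasurableSpace X]
    [MetricSpace A] [CompactSpace A] [Nonempty A] [MeasurableSpace A] [BorelSpace A]
    (v : X → A → ℝ)
    (hbdd : ∀ x, BddBelow (Set.range (v x)))
    (hE : ∀ (a : A) (r : ℝ), 0 < r →
      MeasurableSet {x | ∃ u, dist u a ≤ r ∧ v x u ≤ ⨅ u', v x u'})
    (hatt : ∀ x, ∃ u, (⨅ u', v x u') = v x u)
    (hcl : ∀ x, IsClosed {u | v x u ≤ ⨅ u', v x u'}) :
    ∃ μ : X → A, Measurable μ ∧ ∀ x, (⨅ u', v x u') = v x (μ x) := by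
  -- dense sequence in A
  obtain ⟨a, ha⟩ := TopologicalSpace.exists_dense_seq A
  set V : X → ℝ := fun x => ⨅ u', v x u' with hV
  set M : X → Set A := fun x => {u | v x u ≤ V x} with hM
  have hMne : ∀ x, (M x).Nonempty := by
    intro x
    obtain ⟨u, hu⟩ := hatt x
    exact ⟨u, le_of_eq hu.symm⟩
  set r : ℕ → ℝ := fun m => (1/2 : ℝ)^m with hr
  have hrpos : ∀ m, 0 < r m := fun m => by positivity
  set E : ℕ → ℝ → Set X := fun n ρ => {x | ∃ u, dist u (a n) ≤ ρ ∧ v x u ≤ V x} with hEdef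
  have hEmeas : ∀ n (ρ : ℝ), 0 < ρ → MeasurableSet (E n ρ) := fun n ρ hρ => hE (a n) ρ hρ
  -- the recursive index function
  let K : ℕ → X → ℕ := fun m => Nat.rec
    (fun x => sInf {n | x ∈ E n (r 0)})
    (fun m Km x => sInf {n | x ∈ E n (r (m+1)) ∧ dist (a n) (a (Km x)) ≤ r m + r (m+1)}) m
  have hK0 : K 0 = fun x => sInf {n | x ∈ E n (r 0)} := rfl
  have hKsucc : ∀ m, K (m+1) = fun x =>
      sInf {n | x ∈ E n (r (m+1)) ∧ dist (a n) (a (K m x)) ≤ r m + r (m+1)} := fun m => rfl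
  -- invariant: x ∈ E (K m x) (r m)
  have hinv : ∀ m x, x ∈ E (K m x) (r m) := by
    intro m x
    induction m with
    | zero =>
      have hne : {n | x ∈ E n (r 0)}.Nonempty := by
        obtain ⟨u, hu⟩ := hMne x
        obtain ⟨n, hn⟩ := ha.exists_dist_lt u (hrpos 0)
        exact ⟨n, u, hn.le, hu⟩
      exact Nat.sInf_mem hne
    | succ m ih =>
      have hne : {n | x ∈ E n (r (m+1)) ∧ dist (a n) (a (K m x)) ≤ r m + r (m+1)}.Nonempty := by
        obtain ⟨u, hu1, hu2⟩ := ih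
        obtain ⟨n, hn⟩ := ha.exists_dist_lt u (hrpos (m+1))
        refine ⟨n, ⟨u, hn.le, hu2⟩, ?_⟩
        calc dist (a n) (a (K m x)) ≤ dist (a n) u + dist u (a (K m x)) := dist_triangle _ _ _
          _ ≤ r (m+1) + r m := add_le_add (by rw [dist_comm]; exact hn.le) hu1
          _ = r m + r (m+1) := by ring
      have := Nat.sInf_mem hne
      rw [hKsucc m]
      exact this.1
  have hstep : ∀ m x, dist (a (K (m+1) x)) (a (K m x)) ≤ r m + r (m+1) := by
    intro m x
    have hne : {n | x ∈ E n (r (m+1)) ∧ dist (a n) (a (K m x)) ≤ r m + r (m+1)}.Nonempty := by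
      obtain ⟨u, hu1, hu2⟩ := hinv m x
      obtain ⟨n, hn⟩ := ha.exists_dist_lt u (hrpos (m+1))
      refine ⟨n, ⟨u, hn.le, hu2⟩, ?_⟩
      calc dist (a n) (a (K m x)) ≤ dist (a n) u + dist u (a (K m x)) := dist_triangle _ _ _
        _ ≤ r (m+1) + r m := add_le_add (by rw [dist_comm]; exact hn.le) hu1
        _ = r m + r (m+1) := by ring
    have := Nat.sInf_mem hne
    rw [hKsucc m]
    exact this.2
  -- measurability of K m
  have hKmeas : ∀ m, Measurable (K m) := by
    intro m
    induction m with
    | zero =>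
      rw [hK0]
      exact measurable_nat_sInf (fun n => hEmeas n _ (hrpos 0))
    | succ m ih =>
      rw [hKsucc m]
      apply measurable_nat_sInf
      intro n
      have : {x | x ∈ E n (r (m+1)) ∧ dist (a n) (a (K m x)) ≤ r m + r (m+1)} =
          E n (r (m+1)) ∩ (K m) ⁻¹' {j | dist (a n) (a j) ≤ r m + r (m+1)} := rfl
      rw [this]
      exact (hEmeas n _ (hrpos (m+1))).inter (ih (by
        exact Set.Countable.measurableSet (Set.to_countable _)))
  -- the approximating sequence is Cauchy
  have hcauchy : ∀ x, CauchySeq (fun m => a (K m x)) := by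
    intro x
    apply cauchySeq_of_le_geometric (r := (1/2 : ℝ)) (C := 2) (by norm_num)
    intro m
    rw [dist_comm]
    calc dist (a (K (m+1) x)) (a (K m x)) ≤ r m + r (m+1) := hstep m x
      _ ≤ 2 * (1/2)^m := by
        simp only [hr, pow_succ]
        nlinarith [pow_pos (by norm_num : (0:ℝ) < 1/2) m]
  have hlim : ∀ x, ∃ u, Tendsto (fun m => a (K m x)) atTop (𝓝 u) :=
    fun x => cauchySeq_tendsto_of_complete (hcauchy x)
  refine ⟨fun x => (hlim x).choose, ?_, ?_⟩
  · exact measurable_of_tendsto_metrizable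
      (fun m => measurable_from_nat.comp (hKmeas m)) (by
        exact tendsto_pi_nhds.mpr (fun x => (hlim x).choose_spec))
  · intro x
    have hmem : (hlim x).choose ∈ M x := by
      have hclosed := hcl x
      have htend := (hlim x).choose_spec
      -- infDist argument
      have hinf : ∀ m, Metric.infDist (a (K m x)) (M x) ≤ r m := by
        intro m
        obtain ⟨u, hu1, hu2⟩ := hinv m x
        calc Metric.infDist (a (K m x)) (M x) ≤ dist (a (K m x)) u :=
          Metric.infDist_le_dist_of_mem hu2
          _ ≤ r m := by rw [dist_comm]; exact hu1
      have h0 : Metric.infDist ((hlim x).choose) (M x) = 0 := by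
        have hcont : Tendsto (fun m => Metric.infDist (a (K m x)) (M x)) atTop
            (𝓝 (Metric.infDist ((hlim x).choose) (M x))) :=
          ((Metric.continuous_infDist_pt (M x)).tendsto _).comp htend
        have hge : 0 ≤ Metric.infDist ((hlim x).choose) (M x) := Metric.infDist_nonneg
        have hrtend : Tendsto r atTop (𝓝 0) :=
          tendsto_pow_atTop_nhds_zero_of_lt_one (by norm_num) (by norm_num)
        have hle : Metric.infDist ((hlim x).choose) (M x) ≤ 0 :=
          le_of_tendsto_of_tendsto' hcont hrtend hinf
        linarith
      exact ((hclosed.mem_iff_infDist_zero (hMne x)).mpr h0)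
    exact le_antisymm (ciInf_le (hbdd x) _) hmem

lemma lsc_attains_min {A : Type*} [TopologicalSpace A] [CompactSpace A] [Nonempty A]
    {φ : A → ℝ} (hφ : LowerSemicontinuous φ) {m : ℝ} (hm : ∀ u, m ≤ φ u) :
    ∃ u, (⨅ u', φ u') = φ u := by
  have hbdd : BddBelow (Set.range φ) := ⟨m, fun y ⟨u, hu⟩ => hu ▸ hm u⟩
  set I := ⨅ u', φ u' with hI
  by_contra hcon
  push_neg at hcon
  have hgt : ∀ u, I < φ u := fun u =>
    lt_of_le_of_ne (ciInf_le hbdd u) (hcon u)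
  -- for each u pick t_u ∈ (I, φ u) and an open nbhd where φ > t_u
  have hU : ∀ u : A, ∃ t : ℝ, I < t ∧ {z | t < φ z} ∈ 𝓝 u := by
    intro u
    obtain ⟨t, ht1, ht2⟩ := exists_between (hgt u)
    exact ⟨t, ht1, hφ u t ht2⟩
  choose t ht1 ht2 using hU
  obtain ⟨s, hs⟩ := IsCompact.elim_nhds_subcover isCompact_univ
    (fun u => {z | t u < φ z}) (fun u _ => ht2 u)
  have hsne : s.Nonempty := by
    by_contra hse
    rw [Finset.not_nonempty_iff_eq_empty] at hse
    obtain ⟨u⟩ := ‹Nonempty A›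
    have := hs.2 (Set.mem_univ u)
    simp [hse] at this
  set T := s.inf' hsne t with hT
  have hTI : I < T := (Finset.lt_inf'_iff hsne).mpr (fun u _ => ht1 u)
  have hall : ∀ z, T ≤ φ z := by
    intro z
    have := hs.2 (Set.mem_univ z)
    simp only [Finset.mem_coe, Set.mem_iUnion, Set.mem_setOf_eq] at this
    obtain ⟨u, hu, hz⟩ := this
    exact le_trans (Finset.inf'_le t hu) hz.le
  have : T ≤ I := le_ciInf hall
  linarith

lemma lsc_iInf_compact {X A : Type*} [TopologicalSpace X] [TopologicalSpace A]
    [CompactSpace A] [Nonempty A]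
    {v : X × A → ℝ} (hv : LowerSemicontinuous v) {m : ℝ} (hm : ∀ z, m ≤ v z) :
    LowerSemicontinuous (fun x => ⨅ u, v (x, u)) := by
  intro x₀ t ht
  obtain ⟨t', htt', ht'⟩ := exists_between ht
  have hbdd : ∀ x, BddBelow (Set.range (fun u => v (x, u))) :=
    fun x => ⟨m, fun y ⟨u, hu⟩ => hu ▸ hm _⟩
  have hO : IsOpen {z : X × A | t' < v z} :=
    lowerSemicontinuous_iff_isOpen_preimage.mp hv t'
  have hsub : ({x₀} : Set X) ×ˢ (Set.univ : Set A) ⊆ {z | t' < v z} := by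
    rintro ⟨x, u⟩ ⟨hx, -⟩
    simp only [Set.mem_singleton_iff] at hx
    subst hx
    exact lt_of_lt_of_le ht' (ciInf_le (hbdd _) u)
  obtain ⟨U, W, hUopen, hWopen, hxU, hAW, hUW⟩ :=
    generalized_tube_lemma isCompact_singleton isCompact_univ hO hsub
  filter_upwards [hUopen.mem_nhds (hxU rfl)] with x hx
  have : ∀ u, t' ≤ v (x, u) := fun u =>
    (hUW ⟨hx, hAW (Set.mem_univ u)⟩ : t' < v (x, u)).le
  exact lt_of_lt_of_le htt' (le_ciInf this)

section LscIntegral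
variable {X W : Type*} [MetricSpace X] [MetricSpace W]
  [MeasurableSpace W] [OpensMeasurableSpace W]

lemma lsc_integral_kernel (κ : X → ProbabilityMeasure W) (hκ : Continuous κ)
    {h : X × W → ℝ} (hh : LowerSemicontinuous h)
    {m M : ℝ} (hb : ∀ z, h z ∈ Set.Icc m M) :
    LowerSemicontinuous (fun x => ∫ w, h (x, w) ∂(κ x : Measure W)) := by
  intro x₀ t ht
  haveI : Nonempty X := ⟨x₀⟩
  haveI : Nonempty W := (κ x₀).nonempty
  -- Lipschitz approximations
  set g : ℕ → X × W → ℝ := fun n z => ⨅ z', (h z' + n * dist z z') with hg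
  have hbddg : ∀ (n : ℕ) (z : X × W),
      BddBelow (Set.range fun z' => h z' + n * dist z z') := by
    rintro n z
    refine ⟨m, ?_⟩
    rintro y ⟨z', rfl⟩
    simp only
    have h1 := (hb z').1
    have h2 : (0:ℝ) ≤ n * dist z z' := by positivity
    linarith
  have hgle : ∀ n z, g n z ≤ h z := by
    intro n z
    have := ciInf_le (hbddg n z) z
    simpa using this
  have hmle : ∀ n z, m ≤ g n z := by
    intro n z
    refine le_ciInf fun z' => ?_
    have : (0:ℝ) ≤ n * dist z z' := by positivity
    linarith [(hb z').1]
  have hlip : ∀ (n : ℕ) (z₁ z₂ : X × W), g n z₁ ≤ g n z₂ + n * dist z₁ z₂ := by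
    intro n z₁ z₂
    rw [← sub_le_iff_le_add]
    refine le_ciInf fun z' => ?_
    have h1 : g n z₁ ≤ h z' + n * dist z₁ z' := ciInf_le (hbddg n z₁) z'
    have htri : dist z₁ z' ≤ dist z₁ z₂ + dist z₂ z' := dist_triangle _ _ _
    have hn : (0:ℝ) ≤ n := Nat.cast_nonneg n
    nlinarith
  have hgmono : ∀ z, Monotone fun n => g n z := by
    intro z
    apply monotone_nat_of_le_succ
    intro n
    refine le_ciInf fun z' => ?_
    refine le_trans (ciInf_le (hbddg n z) z') ?_
    have : (n:ℝ) * dist z z' ≤ (n+1 : ℕ) * dist z z' := by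
      have : ((n:ℝ)) ≤ ((n+1 : ℕ):ℝ) := by exact_mod_cast Nat.le_succ n
      nlinarith [dist_nonneg (x := z) (y := z')]
    linarith
  have hgtend : ∀ z, Filter.Tendsto (fun n => g n z) Filter.atTop (𝓝 (h z)) := by
    intro z
    rw [Metric.tendsto_atTop]
    intro ε hε
    obtain ⟨δ, hδ, hδh⟩ := Metric.eventually_nhds_iff.mp (hh z (h z - ε/2) (by linarith))
    obtain ⟨N, hN⟩ := exists_nat_ge ((M - m)/δ)
    refine ⟨N, fun n hn => ?_⟩
    have hlow : h z - ε/2 ≤ g n z := by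
      refine le_ciInf fun z' => ?_
      by_cases hcase : dist z' z < δ
      · have := hδh hcase
        have hd : (0:ℝ) ≤ n * dist z z' := by positivity
        linarith
      · push_neg at hcase
        have hd : δ ≤ dist z z' := by rwa [dist_comm]
        have h1 : (M - m)/δ * δ ≤ (N:ℝ) * δ := by
          apply mul_le_mul_of_nonneg_right hN hδ.le
        have h2 : (N:ℝ) * δ ≤ n * δ := by
          apply mul_le_mul_of_nonneg_right _ hδ.le
          exact_mod_cast hn
        have h3 : (n:ℝ) * δ ≤ n * dist z z' := by
          apply mul_le_mul_of_nonneg_left hd (Nat.cast_nonneg n)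
        have h4 : (M - m)/δ * δ = M - m := div_mul_cancel₀ _ (ne_of_gt hδ)
        have h5 : h z ≤ M := (hb z).2
        have h6 : m ≤ h z' := (hb z').1
        linarith
    have habs : dist (g n z) (h z) = h z - g n z := by
      rw [Real.dist_eq, abs_of_nonpos (by linarith [hgle n z])]
      ring
    rw [habs]
    linarith
  -- measurability and integrability
  have hgcont : ∀ n, Continuous (g n) := by
    intro n
    rw [Metric.continuous_iff]
    intro z ε hε
    rcases Nat.eq_zero_or_pos n with h0 | h0
    · refine ⟨1, one_pos, fun z' _ => ?_⟩
      have h1 := hlip n z z'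
      have h2 := hlip n z' z
      subst h0
      simp only [Nat.cast_zero, zero_mul, add_zero] at h1 h2
      rw [Real.dist_eq]
      have : g 0 z' = g 0 z := le_antisymm h2 h1
      rw [this]
      simpa using hε
    · refine ⟨ε / n, by positivity, fun z' hz' => ?_⟩
      have h1 := hlip n z z'
      have h2 := hlip n z' z
      rw [Real.dist_eq, abs_lt]
      have hd : dist z z' = dist z' z := dist_comm _ _
      have hnd : (n:ℝ) * dist z' z < n * (ε / n) := by
        apply mul_lt_mul_of_pos_left hz' (by exact_mod_cast h0)
      have hne : (n:ℝ) ≠ 0 := by exact_mod_cast h0.ne'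
      rw [mul_div_cancel₀ _ hne] at hnd
      constructor <;> [skip; skip]
      · have := h2; rw [hd] at h1; nlinarith [h1, hnd]
      · nlinarith [h2, hnd]
  have hhmeasw : ∀ x : X, Measurable (fun w => h (x, w)) := by
    intro x
    have : LowerSemicontinuous (fun w => h (x, w)) :=
      hh.comp (by fun_prop)
    exact this.measurable
  have hInth : ∀ x : X, Integrable (fun w => h (x, w)) (κ x : Measure W) := by
    intro x
    refine (integrable_const (max |m| |M|)).mono'
      (hhmeasw x).aestronglyMeasurable ?_
    filter_upwards [] with w
    rw [Real.norm_eq_abs, abs_le]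
    constructor
    · have := (hb (x, w)).1
      have : -(max |m| |M|) ≤ m := by
        have := abs_nonneg m
        have := le_max_left |m| |M|
        have := neg_abs_le m
        linarith
      linarith [(hb (x,w)).1]
    · have h1 := (hb (x, w)).2
      have h2 : M ≤ max |m| |M| := le_trans (le_abs_self M) (le_max_right _ _)
      linarith
  have hIntg : ∀ (n : ℕ) (x y : X), Integrable (fun w => g n (y, w)) (κ x : Measure W) := by
    intro n x y
    refine (integrable_const (max |m| |M|)).mono'
      ((hgcont n).comp (by fun_prop : Continuous fun w => ((y, w) : X × W))).measurable.aestronglyMeasurable ?_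
    filter_upwards [] with w
    rw [Real.norm_eq_abs, abs_le]
    constructor
    · have h2 : -(max |m| |M|) ≤ m := by
        have := neg_abs_le m
        have := le_max_left |m| |M|
        linarith
      linarith [hmle n (y, w)]
    · have h1 : M ≤ max |m| |M| := le_trans (le_abs_self M) (le_max_right _ _)
      linarith [hgle n (y, w), (hb (y, w)).2]
  set F : X → ℝ := fun x => ∫ w, h (x, w) ∂(κ x : Measure W) with hF
  set Fn : ℕ → X → ℝ := fun n x => ∫ w, g n (x, w) ∂(κ x : Measure W) with hFn
  have hFnleF : ∀ n x, Fn n x ≤ F x := by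
    intro n x
    exact integral_mono (hIntg n x x) (hInth x) (fun w => hgle n (x, w))
  have hFntend : ∀ x, Filter.Tendsto (fun n => Fn n x) Filter.atTop (𝓝 (F x)) := by
    intro x
    apply integral_tendsto_of_tendsto_of_monotone (fun n => hIntg n x x) (hInth x)
    · filter_upwards [] with w
      intro n k hnk
      exact hgmono (x, w) hnk
    · filter_upwards [] with w
      exact hgtend (x, w)
  -- continuity of each Fn
  have hFncont : ∀ n, ContinuousAt (Fn n) x₀ := by
    intro n
    have hgb : ∀ w₁ w₂ : W, dist (g n (x₀, w₁)) (g n (x₀, w₂)) ≤ |M - m| := by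
      intro w₁ w₂
      rw [Real.dist_eq]
      have b1 := hmle n (x₀, w₁)
      have b2 := hgle n (x₀, w₁)
      have b3 := hmle n (x₀, w₂)
      have b4 := hgle n (x₀, w₂)
      have c1 := (hb (x₀, w₁)).2
      have c2 := (hb (x₀, w₂)).2
      rw [abs_le]
      have := le_abs_self (M - m)
      have := neg_abs_le (M - m)
      constructor <;> linarith
    set G : BoundedContinuousFunction W ℝ :=
      BoundedContinuousFunction.mkOfBound
        ⟨fun w => g n (x₀, w), (hgcont n).comp (by fun_prop)⟩ |M - m| hgb with hG
    have hA : Filter.Tendsto (fun x => ∫ w, G w ∂(κ x : Measure W)) (𝓝 x₀)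
        (𝓝 (∫ w, G w ∂(κ x₀ : Measure W))) := by
      have hk : Filter.Tendsto κ (𝓝 x₀) (𝓝 (κ x₀)) := hκ.tendsto x₀
      exact MeasureTheory.ProbabilityMeasure.tendsto_iff_forall_integral_tendsto.mp hk G
    have hGw : ∀ w, G w = g n (x₀, w) := fun w => rfl
    have hptw : ∀ (x : X) (w : W), |g n (x, w) - g n (x₀, w)| ≤ n * dist x x₀ := by
      intro x w
      have hd : dist ((x, w) : X × W) (x₀, w) = dist x x₀ := by
        rw [Prod.dist_eq, dist_self]
        exact max_eq_left dist_nonneg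
      have h1 := hlip n (x, w) (x₀, w)
      have h2 := hlip n (x₀, w) (x, w)
      rw [hd] at h1
      rw [dist_comm, hd] at h2
      rw [abs_le]
      constructor <;> linarith
    have hclose : ∀ x, |Fn n x - ∫ w, G w ∂(κ x : Measure W)| ≤ n * dist x x₀ := by
      intro x
      have hGint : Integrable (fun w => G w) (κ x : Measure W) := hIntg n x x₀
      have hsub : Fn n x - ∫ w, G w ∂(κ x : Measure W) =
          ∫ w, (g n (x, w) - G w) ∂(κ x : Measure W) := by
        rw [integral_sub (hIntg n x x) hGint]
      rw [hsub, ← Real.norm_eq_abs]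
      have := norm_integral_le_of_norm_le_const (μ := (κ x : Measure W))
        (f := fun w => g n (x, w) - G w) (C := n * dist x x₀)
        (by filter_upwards [] with w
            rw [Real.norm_eq_abs, hGw w]
            exact hptw x w)
      simpa using this
    have hzero : Filter.Tendsto (fun x => (n:ℝ) * dist x x₀) (𝓝 x₀) (𝓝 0) := by
      have : Filter.Tendsto (fun x => dist x x₀) (𝓝 x₀) (𝓝 (dist x₀ x₀)) :=
        ((continuous_id.dist continuous_const).tendsto x₀)
      rw [dist_self] at this
      simpa using Filter.Tendsto.const_mul (n:ℝ) this
    have hFnx₀ : Fn n x₀ = ∫ w, G w ∂(κ x₀ : Measure W) := rfl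
    rw [ContinuousAt, hFnx₀]
    apply tendsto_of_tendsto_of_tendsto_of_le_of_le
      (g := fun x => (∫ w, G w ∂(κ x : Measure W)) - n * dist x x₀)
      (h := fun x => (∫ w, G w ∂(κ x : Measure W)) + n * dist x x₀)
    · simpa using hA.sub hzero
    · simpa using hA.add hzero
    · intro x
      dsimp only
      have := (abs_le.mp (hclose x)).1
      linarith
    · intro x
      dsimp only
      have := (abs_le.mp (hclose x)).2
      linarith
  -- conclude lsc at x₀
  have hev : ∃ n, t < Fn n x₀ := by
    have := (hFntend x₀).eventually (eventually_gt_nhds ht)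
    exact this.exists
  obtain ⟨n, hn⟩ := hev
  have hcont := (hFncont n).eventually (eventually_gt_nhds hn)
  filter_upwards [hcont] with x hx
  exact lt_of_lt_of_le hx (hFnleF n x)

end LscIntegral

lemma integrable_of_Icc {W : Type*} [MeasurableSpace W] (μ : Measure W) [IsFiniteMeasure μ]
    {φ : W → ℝ} (hm : Measurable φ) {m M : ℝ} (hb : ∀ w, φ w ∈ Set.Icc m M) :
    Integrable φ μ := by
  refine (integrable_const (max |m| |M|)).mono' hm.aestronglyMeasurable ?_
  filter_upwards [] with w
  rw [Real.norm_eq_abs, abs_le]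
  constructor
  · have h1 : -(max |m| |M|) ≤ m := by
      have := neg_abs_le m
      have := le_max_left |m| |M|
      linarith
    linarith [(hb w).1]
  · have h1 : M ≤ max |m| |M| := le_trans (le_abs_self M) (le_max_right _ _)
    linarith [(hb w).2]

lemma integral_mem_Icc {W : Type*} [MeasurableSpace W] (μ : Measure W) [IsProbabilityMeasure μ]
    {φ : W → ℝ} (hm : Measurable φ) {m M : ℝ} (hb : ∀ w, φ w ∈ Set.Icc m M) :
    (∫ w, φ w ∂μ) ∈ Set.Icc m M := by
  have hint := integrable_of_Icc μ hm hb
  constructor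
  · have := integral_mono (integrable_const m) hint (fun w => (hb w).1)
    simpa [integral_const] using this
  · have := integral_mono hint (integrable_const M) (fun w => (hb w).2)
    simpa [integral_const] using this

/-- The one-step risk-averse Bellman operator preserves lower semicontinuity
and boundedness, and admits a Borel-measurable minimizing selector. -/
theorem stmt14 {S A : Type*} (d : ℕ)
    [MetricSpace S] [MeasurableSpace S] [BorelSpace S]
    [MetricSpace A] [CompactSpace A] [Nonempty A] [MeasurableSpace A] [BorelSpace A]
    (f : S × A × (Fin d → ℝ) → S) (hf : Continuous f)
    (c : S × A → ℝ) (hc : LowerSemicontinuous c)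
    (cL cU : ℝ) (hcbd : ∀ z, cL ≤ c z ∧ c z ≤ cU)
    (p : S × A → ProbabilityMeasure (Fin d → ℝ)) (hp : Continuous p)
    (θ : ℝ) (hθ : θ < 0)
    (V' : S → ℝ) (hV' : LowerSemicontinuous V')
    (bL bU : ℝ) (hV'bd : ∀ x, bL ≤ V' x ∧ V' x ≤ bU) :
    ∃ vL vU : ℝ,
      (LowerSemicontinuous (fun z : S × A =>
        c z + (-2 / θ) * Real.log (∫ w, Real.exp ((-θ / 2) * V' (f (z.1, z.2, w)))
          ∂(p z : Measure (Fin d → ℝ)))) ∧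
      (∀ z : S × A,
        c z + (-2 / θ) * Real.log (∫ w, Real.exp ((-θ / 2) * V' (f (z.1, z.2, w)))
          ∂(p z : Measure (Fin d → ℝ))) ∈ Set.Icc vL vU)) ∧
      (LowerSemicontinuous (fun x : S => ⨅ u : A,
        (c (x, u) + (-2 / θ) * Real.log (∫ w, Real.exp ((-θ / 2) * V' (f (x, u, w)))
          ∂(p (x, u) : Measure (Fin d → ℝ))))) ∧
      (∀ x : S, (⨅ u : A,
        (c (x, u) + (-2 / θ) * Real.log (∫ w, Real.exp ((-θ / 2) * V' (f (x, u, w)))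
          ∂(p (x, u) : Measure (Fin d → ℝ))))) ∈ Set.Icc vL vU)) ∧
      ∃ μ : S → A, Measurable μ ∧ ∀ x : S,
        (⨅ u : A,
          (c (x, u) + (-2 / θ) * Real.log (∫ w, Real.exp ((-θ / 2) * V' (f (x, u, w)))
            ∂(p (x, u) : Measure (Fin d → ℝ))))) =
        c (x, μ x) + (-2 / θ) * Real.log (∫ w, Real.exp ((-θ / 2) * V' (f (x, μ x, w)))
          ∂(p (x, μ x) : Measure (Fin d → ℝ))) := by
  classical
  have hα : (0:ℝ) < -θ/2 := by linarith
  have hβ : (0:ℝ) < -2/θ := by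
    apply div_pos_of_neg_of_neg <;> linarith
  -- the integrand
  set h : (S × A) × (Fin d → ℝ) → ℝ := fun q => Real.exp ((-θ/2) * V' (f (q.1.1, q.1.2, q.2))) with hh
  have hhlsc : LowerSemicontinuous h := by
    have hproj0 : Continuous (fun q : (S × A) × (Fin d → ℝ) =>
        ((q.1.1, q.1.2, q.2) : S × A × (Fin d → ℝ))) := by fun_prop
    have hproj : Continuous (fun q : (S × A) × (Fin d → ℝ) => f (q.1.1, q.1.2, q.2)) :=
      hf.comp hproj0
    have hVf : LowerSemicontinuous
        (fun q : (S × A) × (Fin d → ℝ) => V' (f (q.1.1, q.1.2, q.2))) :=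
      hV'.comp hproj
    have hexp : Continuous (fun t : ℝ => Real.exp ((-θ/2) * t)) :=
      Real.continuous_exp.comp (continuous_const.mul continuous_id)
    have hmono : Monotone (fun t : ℝ => Real.exp ((-θ/2) * t)) := fun a b hab =>
      Real.exp_le_exp.mpr (mul_le_mul_of_nonneg_left hab hα.le)
    exact hexp.comp_lowerSemicontinuous hVf hmono
  set m : ℝ := Real.exp ((-θ/2) * bL) with hm
  set M : ℝ := Real.exp ((-θ/2) * bU) with hM
  have hmpos : 0 < m := Real.exp_pos _
  have hhb : ∀ q, h q ∈ Set.Icc m M := by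
    intro q
    constructor
    · exact Real.exp_le_exp.mpr (mul_le_mul_of_nonneg_left (hV'bd _).1 hα.le)
    · exact Real.exp_le_exp.mpr (mul_le_mul_of_nonneg_left (hV'bd _).2 hα.le)
  -- the integral
  set G : S × A → ℝ := fun z => ∫ w, h (z, w) ∂(p z : Measure (Fin d → ℝ)) with hG
  have hGlsc : LowerSemicontinuous G := lsc_integral_kernel p hp hhlsc hhb
  have hhmeas : ∀ z : S × A, Measurable (fun w => h (z, w)) := by
    intro z
    have : LowerSemicontinuous (fun w => h (z, w)) := hhlsc.comp (by fun_prop)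
    exact this.measurable
  have hGb : ∀ z, G z ∈ Set.Icc m M := fun z =>
    integral_mem_Icc (p z : Measure (Fin d → ℝ)) (hhmeas z) (fun w => hhb (z, w))
  -- ψ
  set ψ : S × A → ℝ := fun z => (-2/θ) * Real.log (G z) with hψ
  have hψlsc : LowerSemicontinuous ψ := by
    have hφcont : Continuous (fun t : ℝ => (-2/θ) * Real.log (max t m)) :=
      continuous_const.mul ((continuous_id.max continuous_const).log
        (fun t => (lt_max_of_lt_right hmpos).ne'))
    have hφmono : Monotone (fun t : ℝ => (-2/θ) * Real.log (max t m)) := by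
      intro a b hab
      apply mul_le_mul_of_nonneg_left _ hβ.le
      apply Real.log_le_log (lt_max_of_lt_right hmpos)
      exact max_le_max hab le_rfl
    have := hφcont.comp_lowerSemicontinuous hGlsc hφmono
    have heq : (fun t : ℝ => (-2/θ) * Real.log (max t m)) ∘ G = ψ := by
      funext z
      simp only [Function.comp_apply, hψ]
      rw [max_eq_left (hGb z).1]
    rwa [heq] at this
  have hψb : ∀ z, ψ z ∈ Set.Icc bL bU := by
    intro z
    have hlog1 : Real.log m ≤ Real.log (G z) := Real.log_le_log hmpos (hGb z).1
    have hlog2 : Real.log (G z) ≤ Real.log M :=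
      Real.log_le_log (lt_of_lt_of_le hmpos (hGb z).1) (hGb z).2
    rw [hm, Real.log_exp] at hlog1
    rw [hM, Real.log_exp] at hlog2
    have hβα : (-2/θ) * (-θ/2) = 1 := by
      field_simp
      exact div_self hθ.ne
    constructor
    · have := mul_le_mul_of_nonneg_left hlog1 hβ.le
      calc bL = (-2/θ) * ((-θ/2) * bL) := by rw [← mul_assoc, hβα, one_mul]
        _ ≤ ψ z := this
    · have := mul_le_mul_of_nonneg_left hlog2 hβ.le
      calc ψ z ≤ (-2/θ) * ((-θ/2) * bU) := this
        _ = bU := by rw [← mul_assoc, hβα, one_mul]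
  -- v
  set v : S × A → ℝ := fun z => c z + ψ z with hv
  have hvlsc : LowerSemicontinuous v := hc.add hψlsc
  have hvb : ∀ z, v z ∈ Set.Icc (cL + bL) (cU + bU) := by
    intro z
    exact ⟨add_le_add (hcbd z).1 (hψb z).1, add_le_add (hcbd z).2 (hψb z).2⟩
  have hbddv : ∀ x : S, BddBelow (Set.range (fun u => v (x, u))) :=
    fun x => ⟨cL + bL, by rintro y ⟨u, rfl⟩; exact (hvb _).1⟩
  -- value function
  have hVlsc : LowerSemicontinuous (fun x : S => ⨅ u : A, v (x, u)) :=
    lsc_iInf_compact hvlsc (fun z => (hvb z).1)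
  have hVb : ∀ x : S, (⨅ u : A, v (x, u)) ∈ Set.Icc (cL + bL) (cU + bU) := by
    intro x
    constructor
    · exact le_ciInf (fun u => (hvb _).1)
    · exact ciInf_le_of_le (hbddv x) (Classical.arbitrary A) (hvb _).2
  have hatt : ∀ x : S, ∃ u, (⨅ u' : A, v (x, u')) = v (x, u) := by
    intro x
    have hlscx : LowerSemicontinuous (fun u : A => v (x, u)) :=
      hvlsc.comp (by fun_prop)
    exact lsc_attains_min hlscx (fun u => (hvb _).1)
  -- selector
  have hsel : ∃ μ : S → A, Measurable μ ∧ ∀ x : S, (⨅ u' : A, v (x, u')) = v (x, μ x) := by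
    apply measurable_argmin_selector (v := fun x u => v (x, u)) hbddv ?_ hatt ?_
    · -- measurability of the E-sets
      intro a r hr
      set K := Metric.closedBall a r with hK
      have hKc : IsCompact K := (Metric.isClosed_closedBall).isCompact
      haveI : CompactSpace K := isCompact_iff_compactSpace.mp hKc
      haveI : Nonempty K := ⟨⟨a, Metric.mem_closedBall_self hr.le⟩⟩
      have hvK : LowerSemicontinuous (fun q : S × K => v (q.1, (q.2 : A))) :=
        hvlsc.comp
          (continuous_fst.prodMk (continuous_subtype_val.comp continuous_snd))
      have hΦlsc : LowerSemicontinuous (fun x : S => ⨅ u : K, v (x, (u : A))) :=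
        lsc_iInf_compact hvK (fun z => (hvb _).1)
      have hΦmeas : Measurable (fun x : S => ⨅ u : K, v (x, (u : A))) := hΦlsc.measurable
      have hVmeas : Measurable (fun x : S => ⨅ u : A, v (x, u)) := hVlsc.measurable
      have hbddK : ∀ x : S, BddBelow (Set.range (fun u : K => v (x, (u : A)))) :=
        fun x => ⟨cL + bL, by rintro y ⟨u, rfl⟩; exact (hvb _).1⟩
      have hseteq : {x : S | ∃ u, dist u a ≤ r ∧ v (x, u) ≤ ⨅ u' : A, v (x, u')} =
          {x : S | (⨅ u : K, v (x, (u : A))) ≤ ⨅ u' : A, v (x, u')} := by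
        ext x
        simp only [Set.mem_setOf_eq]
        constructor
        · rintro ⟨u, hu1, hu2⟩
          have hmem : u ∈ K := Metric.mem_closedBall.mpr hu1
          exact le_trans (ciInf_le (hbddK x) ⟨u, hmem⟩) hu2
        · intro hle
          have hlscK : LowerSemicontinuous (fun u : K => v (x, (u : A))) :=
            hvK.comp (by fun_prop : Continuous fun u : K => ((x, u) : S × K))
          obtain ⟨u₀, hu₀⟩ := lsc_attains_min hlscK (fun u => (hvb _).1)
          exact ⟨(u₀ : A), Metric.mem_closedBall.mp u₀.2, by rw [← hu₀]; exact hle⟩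
      rw [show {x : S | ∃ u, dist u a ≤ r ∧ v (x, u) ≤ ⨅ u', v (x, u')} =
          {x : S | (⨅ u : K, v (x, (u : A))) ≤ ⨅ u' : A, v (x, u')} from hseteq]
      exact measurableSet_le hΦmeas hVmeas
    · -- closedness of argmin sets
      intro x
      have hlscx : LowerSemicontinuous (fun u : A => v (x, u)) :=
        hvlsc.comp (by fun_prop)
      have hopen : IsOpen {u : A | (⨅ u' : A, v (x, u')) < v (x, u)} :=
        lowerSemicontinuous_iff_isOpen_preimage.mp hlscx _
      have : {u : A | v (x, u) ≤ ⨅ u' : A, v (x, u')} =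
          {u : A | (⨅ u' : A, v (x, u')) < v (x, u)}ᶜ := by
        ext u; simp [not_lt]
      rw [this]
      exact hopen.isClosed_compl
  -- assemble
  refine ⟨cL + bL, cU + bU, ⟨hvlsc, hvb⟩, ⟨hVlsc, hVb⟩, ?_⟩
  obtain ⟨μ, hμmeas, hμ⟩ := hsel
  exact ⟨μ, hμmeas, hμ⟩
end

section
/- Consider a finite-horizon Markov decision process with horizon N, state space S, compact action space A, continuous dynamics x_{t+1} = f_t(x_t, u_t, w_t), continuous disturbance kernels p_t(dw|x,u), and bounded lower semicontinuous stage costs c_t and terminal cost c_N. For θ < 0, define value functions by backward recursion: V_N^θ := c_N and V_t^θ(x) := inf_{u∈A} [ c_t(x,u) + (−2/θ) log ∫ exp((−θ/2) V_{t+1}^θ(f_t(x,u,w))) p_t(dw|x,u) ]. Then by backward induction, for every t ∈ {0,…,N}, V_t^θ is lower semicontinuous and bounded, and for every t ∈ {0,…,N−1} there exists a Borel-measurable policy map μ_t^θ : S → A attaining the infimum. -/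
open MeasureTheory

open Filter Topology Set Metric

namespace Stmt15Aux

variable {Z : Type*} [PseudoMetricSpace Z]

/-- Moreau–Yosida approximation. -/
noncomputable def my (g : Z → ℝ) (n : ℕ) (z : Z) : ℝ := ⨅ z' : Z, (g z' + n * dist z z')

variable {g : Z → ℝ} {m M : ℝ}

lemma bddBelow_my (hm : ∀ z, m ≤ g z) (n : ℕ) (z : Z) :
    BddBelow (Set.range fun z' => g z' + n * dist z z') := by
  refine ⟨m, ?_⟩
  rintro _ ⟨z', rfl⟩
  show m ≤ g z' + n * dist z z'
  have h1 := hm z'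
  have h2 : (0:ℝ) ≤ n * dist z z' := by positivity
  linarith

lemma my_le (hm : ∀ z, m ≤ g z) (n : ℕ) (z : Z) : my g n z ≤ g z := by
  have := ciInf_le (bddBelow_my hm n z) z
  simpa [my] using this

lemma le_my (hm : ∀ z, m ≤ g z) (n : ℕ) (z : Z) : m ≤ my g n z := by
  have : Nonempty Z := ⟨z⟩
  refine le_ciInf fun z' => ?_
  have h2 : (0:ℝ) ≤ n * dist z z' := by positivity
  have := hm z'; linarith

lemma my_le_my_add (hm : ∀ z, m ≤ g z) (n : ℕ) (z₁ z₂ : Z) :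
    my g n z₁ ≤ my g n z₂ + n * dist z₁ z₂ := by
  have : Nonempty Z := ⟨z₁⟩
  rw [← sub_le_iff_le_add]
  refine le_ciInf fun z' => sub_le_iff_le_add.2 ?_
  have h1 := ciInf_le (bddBelow_my hm n z₁) z'
  have h2 := dist_triangle z₁ z₂ z'
  have h3 : (n:ℝ) * dist z₁ z' ≤ n * (dist z₁ z₂ + dist z₂ z') := by
    have : (0:ℝ) ≤ n := by positivity
    nlinarith
  simp only [my] at h1 ⊢
  rw [mul_add] at h3
  linarith [dist_comm z₂ z']

lemma abs_my_sub_le (hm : ∀ z, m ≤ g z) (n : ℕ) (z₁ z₂ : Z) :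
    |my g n z₁ - my g n z₂| ≤ n * dist z₁ z₂ := by
  rw [abs_sub_le_iff]
  constructor
  · have := my_le_my_add hm n z₁ z₂; linarith
  · have := my_le_my_add hm n z₂ z₁; rw [dist_comm] at this; linarith

lemma continuous_my (hm : ∀ z, m ≤ g z) (n : ℕ) : Continuous (my g n) := by
  refine (LipschitzWith.of_dist_le_mul (K := n) fun z₁ z₂ => ?_).continuous
  have := abs_my_sub_le hm n z₁ z₂
  simpa [Real.dist_eq] using this

lemma my_mono (hm : ∀ z, m ≤ g z) (z : Z) : Monotone fun n => my g n z := by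
  intro n k hnk
  have : Nonempty Z := ⟨z⟩
  refine le_ciInf fun z' => ?_
  refine (ciInf_le (bddBelow_my hm n z) z').trans ?_
  have : (n:ℝ) * dist z z' ≤ k * dist z z' := by
    have : (n:ℝ) ≤ k := by exact_mod_cast hnk
    nlinarith [dist_nonneg (x := z) (y := z')]
  linarith

lemma tendsto_my (hg : LowerSemicontinuous g) (hm : ∀ z, m ≤ g z) (z : Z) :
    Tendsto (fun n => my g n z) atTop (𝓝 (g z)) := by
  refine tendsto_order.2 ⟨fun c hc => ?_, fun c hc => ?_⟩
  · obtain ⟨c', hcc', hc'⟩ := exists_between hc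
    have hev := hg z c' hc'
    rw [Metric.eventually_nhds_iff] at hev
    obtain ⟨δ, hδ, hball⟩ := hev
    obtain ⟨n₀, hn₀⟩ := exists_nat_ge ((c' - m) / δ)
    refine eventually_atTop.2 ⟨n₀, fun n hn => ?_⟩
    have : Nonempty Z := ⟨z⟩
    have key : c' ≤ my g n z := by
      refine le_ciInf fun z' => ?_
      by_cases hd : dist z' z < δ
      · have := hball hd
        have h2 : (0:ℝ) ≤ n * dist z z' := by positivity
        linarith
      · push_neg at hd
        have h1 := hm z'
        have h2 : (c' - m) ≤ n * δ := by
          rw [div_le_iff₀ hδ] at hn₀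
          have : (n₀:ℝ) ≤ n := by exact_mod_cast hn
          nlinarith
        have h3 : (n:ℝ) * δ ≤ n * dist z z' := by
          rw [dist_comm]
          have : (0:ℝ) ≤ n := by positivity
          nlinarith
        linarith
    linarith
  · filter_upwards with n
    exact lt_of_le_of_lt (my_le hm n z) hc

end Stmt15Aux

namespace Stmt15Aux
open BoundedContinuousFunction in
lemma lsc_integral {Z : Type*} [PseudoMetricSpace Z]
    {W : Type*} [MeasurableSpace W] [PseudoMetricSpace W] [OpensMeasurableSpace W]
    {m M : ℝ}
    (p : Z → ProbabilityMeasure W) (hp : Continuous p)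
    (g : Z × W → ℝ) (hg : LowerSemicontinuous g)
    (hb : ∀ q, g q ∈ Set.Icc m M)
    (hgm : ∀ z, Measurable fun w => g (z, w)) :
    LowerSemicontinuous fun z => ∫ w, g (z, w) ∂(p z : Measure W) := by
  intro z₀ y hy
  have hmle : ∀ q, m ≤ g q := fun q => (hb q).1
  set C : ℝ := max |m| |M| with hC
  have habs : ∀ x : ℝ, m ≤ x → x ≤ M → |x| ≤ C := by
    intro x h1 h2
    rw [abs_le]
    constructor
    · have := neg_abs_le m; have := le_max_left |m| |M|; linarith
    · have := le_abs_self M; have := le_max_right |m| |M|; linarith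
  have hint : ∀ (z : Z) (n : ℕ), Integrable (fun w => my g n (z, w)) (p z : Measure W) := by
    intro z n
    refine Integrable.mono' (integrable_const C)
      (((continuous_my hmle n).comp (Continuous.prodMk_right z)).aestronglyMeasurable) ?_
    refine ae_of_all _ fun w => ?_
    exact habs _ (le_my hmle n (z, w)) ((my_le hmle n (z, w)).trans (hb (z, w)).2)
  have hintg : ∀ z : Z, Integrable (fun w => g (z, w)) (p z : Measure W) := by
    intro z
    refine Integrable.mono' (integrable_const C) ((hgm z).aestronglyMeasurable) ?_
    exact ae_of_all _ fun w => habs _ (hb (z, w)).1 (hb (z, w)).2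
  have htend : Tendsto (fun n => ∫ w, my g n (z₀, w) ∂(p z₀ : Measure W)) atTop
      (𝓝 (∫ w, g (z₀, w) ∂(p z₀ : Measure W))) := by
    refine integral_tendsto_of_tendsto_of_monotone (fun n => hint z₀ n) (hintg z₀) ?_ ?_
    · exact ae_of_all _ fun w => fun n k h => my_mono hmle (z₀, w) h
    · exact ae_of_all _ fun w => tendsto_my hg hmle (z₀, w)
  obtain ⟨n, hn⟩ := (htend.eventually (eventually_gt_nhds hy)).exists
  have hle : ∀ z, ∫ w, my g n (z, w) ∂(p z : Measure W) ≤ ∫ w, g (z, w) ∂(p z : Measure W) :=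
    fun z => integral_mono (hint z n) (hintg z) fun w => my_le hmle n (z, w)
  -- the bounded continuous function `w ↦ my g n (z₀, w)`
  set F : W →ᵇ ℝ := BoundedContinuousFunction.ofNormedAddCommGroup
    (fun w => my g n (z₀, w)) ((continuous_my hmle n).comp (Continuous.prodMk_right z₀)) C
    (fun w => habs _ (le_my hmle n (z₀, w)) ((my_le hmle n (z₀, w)).trans (hb (z₀, w)).2))
    with hF
  have hFval : ∀ w, F w = my g n (z₀, w) := fun w => rfl
  have hA : Tendsto (fun z => ∫ w, F w ∂(p z : Measure W)) (𝓝 z₀)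
      (𝓝 (∫ w, F w ∂(p z₀ : Measure W))) :=
    ((ProbabilityMeasure.continuous_integral_boundedContinuousFunction F).comp hp).continuousAt
  have hdiff : ∀ z, ‖∫ w, my g n (z, w) ∂(p z : Measure W) - ∫ w, F w ∂(p z : Measure W)‖
      ≤ n * dist z z₀ := by
    intro z
    rw [← integral_sub (hint z n) (F.integrable _)]
    refine (norm_integral_le_integral_norm _).trans ?_
    have : ∀ w, ‖my g n (z, w) - F w‖ ≤ n * dist z z₀ := by
      intro w
      rw [hFval w, Real.norm_eq_abs]
      refine (abs_my_sub_le hmle n (z, w) (z₀, w)).trans ?_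
      have : dist (z, w) (z₀, w) = dist z z₀ := by
        rw [Prod.dist_eq]
        simp [max_eq_left dist_nonneg]
      rw [this]
    calc ∫ w, ‖my g n (z, w) - F w‖ ∂(p z : Measure W)
        ≤ ∫ _, (n : ℝ) * dist z z₀ ∂(p z : Measure W) := by
          refine integral_mono ?_ (integrable_const _) this
          exact ((hint z n).sub (F.integrable _)).norm
      _ = n * dist z z₀ := by simp
  have hzero : Tendsto (fun z => ∫ w, my g n (z, w) ∂(p z : Measure W)
      - ∫ w, F w ∂(p z : Measure W)) (𝓝 z₀) (𝓝 0) := by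
    have hd : Tendsto (fun z => (n : ℝ) * dist z z₀) (𝓝 z₀) (𝓝 0) := by
      have : Tendsto (fun z => dist z z₀) (𝓝 z₀) (𝓝 (dist z₀ z₀)) :=
        (continuous_id.dist continuous_const).tendsto z₀
      simpa using tendsto_const_nhds.mul this
    exact squeeze_zero_norm (fun z => by simpa using hdiff z) hd
  have hHn : Tendsto (fun z => ∫ w, my g n (z, w) ∂(p z : Measure W)) (𝓝 z₀)
      (𝓝 (∫ w, my g n (z₀, w) ∂(p z₀ : Measure W))) := by
    have := hzero.add hA
    simpa [hFval] using this
  have hev : ∀ᶠ z in 𝓝 z₀, y < ∫ w, my g n (z, w) ∂(p z : Measure W) :=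
    hHn.eventually (eventually_gt_nhds hn)
  filter_upwards [hev] with z hz
  exact hz.trans_le (hle z)

end Stmt15Aux

namespace Stmt15Aux

lemma isClosed_sublevel {X : Type*} [TopologicalSpace X] {G : X → ℝ}
    (hG : LowerSemicontinuous G) (c : ℝ) : IsClosed {u | G u ≤ c} := by
  have h := hG.isOpen_preimage c
  have : {u | G u ≤ c} = (G ⁻¹' Set.Ioi c)ᶜ := by
    ext u; simp [not_lt]
  rw [this]
  exact h.isClosed_compl

lemma exists_min_on_compact {X : Type*} [TopologicalSpace X] [T2Space X] {G : X → ℝ}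
    (hG : LowerSemicontinuous G) {K : Set X} (hK : IsCompact K) (hne : K.Nonempty)
    (m : ℝ) (hm : ∀ x, m ≤ G x) : ∃ u ∈ K, ∀ u' ∈ K, G u ≤ G u' := by
  set i : ℝ := sInf (G '' K) with hi
  have hbdd : BddBelow (G '' K) := ⟨m, by rintro _ ⟨u, _, rfl⟩; exact hm u⟩
  have hiK : ∀ u ∈ K, i ≤ G u := fun u hu => csInf_le hbdd ⟨u, hu, rfl⟩
  set T : ℕ → Set X := fun n => K ∩ {u | G u ≤ i + 1 / (n + 1)} with hT
  have hTsub : ∀ n, T (n + 1) ⊆ T n := by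
    intro n u hu
    refine ⟨hu.1, ?_⟩
    have h1 : (1 : ℝ) / (n + 1 + 1) ≤ 1 / (n + 1) := by
      apply one_div_le_one_div_of_le
      · positivity
      · push_cast; linarith
    have := hu.2
    simp only [Set.mem_setOf_eq] at this ⊢
    push_cast at this ⊢
    linarith
  have hTne : ∀ n, (T n).Nonempty := by
    intro n
    have hlt : i < i + 1 / (n + 1) := by
      have : (0:ℝ) < 1 / (n+1) := by positivity
      linarith
    obtain ⟨y, ⟨u, hu, rfl⟩, hy⟩ := exists_lt_of_csInf_lt (hne.image G) hlt
    exact ⟨u, hu, le_of_lt hy⟩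
  have hTcl : ∀ n, IsClosed (T n) := fun n =>
    (hK.isClosed.inter (isClosed_sublevel hG _))
  have hT0 : IsCompact (T 0) := hK.inter_right (isClosed_sublevel hG _)
  obtain ⟨u, hu⟩ := IsCompact.nonempty_iInter_of_sequence_nonempty_isCompact_isClosed
    T hTsub hTne hT0 hTcl
  simp only [Set.mem_iInter] at hu
  refine ⟨u, (hu 0).1, fun u' hu' => ?_⟩
  have hGu : G u ≤ i := by
    have htends : Tendsto (fun n : ℕ => i + 1 / (n + 1 : ℝ)) atTop (𝓝 i) := by
      have : Tendsto (fun n : ℕ => 1 / (n + 1 : ℝ)) atTop (𝓝 0) :=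
        tendsto_one_div_add_atTop_nhds_zero_nat
      simpa using tendsto_const_nhds.add this
    exact ge_of_tendsto' htends fun n => (hu n).2
  exact hGu.trans (hiK u' hu')

lemma lsc_inf_compact {S A : Type*} [TopologicalSpace S] [TopologicalSpace A] [T2Space A]
    {G : S × A → ℝ} (hG : LowerSemicontinuous G) (m : ℝ) (hm : ∀ q, m ≤ G q)
    {K : Set A} (hK : IsCompact K) (hne : K.Nonempty) :
    LowerSemicontinuous (fun x => ⨅ u : K, G (x, u)) := by
  have : Nonempty K := hne.to_subtype
  have hbdd : ∀ x : S, BddBelow (Set.range fun u : K => G (x, u)) := fun x =>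
    ⟨m, by rintro _ ⟨u, rfl⟩; exact hm _⟩
  have hGx : ∀ x : S, LowerSemicontinuous fun u : A => G (x, u) := by
    intro x u y hy
    exact LowerSemicontinuousAt.comp (f := G) (hG (x, u)) 
      (Continuous.prodMk_right x).continuousAt y hy
  intro x₀ y hy
  set U : Set (S × A) := {q | y < G q} with hU
  have hUo : IsOpen U := hG.isOpen_preimage y
  have hsub : {x₀} ×ˢ K ⊆ U := by
    rintro ⟨x, u⟩ ⟨hx, hu⟩
    simp only [Set.mem_singleton_iff] at hx
    subst hx
    exact lt_of_lt_of_le hy (ciInf_le (hbdd _) ⟨u, hu⟩)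
  obtain ⟨O, Vv, hOo, _, hxO, hKV, hOV⟩ :=
    generalized_tube_lemma isCompact_singleton hK hUo hsub
  refine Filter.eventually_of_mem (hOo.mem_nhds (hxO rfl)) fun x hx => ?_
  obtain ⟨u', hu', hmin⟩ := exists_min_on_compact (hGx x) hK hne m (fun u => hm (x, u))
  have heq : (⨅ u : K, G (x, u)) = G (x, u') :=
    le_antisymm (ciInf_le (hbdd x) ⟨u', hu'⟩) (le_ciInf fun u => hmin u u.2)
  show y < ⨅ u : K, G (x, u)
  rw [heq]
  exact hOV ⟨hx, hKV hu'⟩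

lemma exists_attains_inf_compact {S A : Type*} [TopologicalSpace S] [TopologicalSpace A]
    [T2Space A] {G : S × A → ℝ} (hG : LowerSemicontinuous G) (m : ℝ) (hm : ∀ q, m ≤ G q)
    {K : Set A} (hK : IsCompact K) (hne : K.Nonempty) (x : S) :
    ∃ u ∈ K, (⨅ v : K, G (x, v)) = G (x, u) ∧ ∀ u' ∈ K, G (x, u) ≤ G (x, u') := by
  have : Nonempty K := hne.to_subtype
  have hbdd : BddBelow (Set.range fun u : K => G (x, u)) :=
    ⟨m, by rintro _ ⟨u, rfl⟩; exact hm _⟩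
  have hGx : LowerSemicontinuous fun u : A => G (x, u) := by
    intro u y hy
    exact LowerSemicontinuousAt.comp (f := G) (hG (x, u))
      (Continuous.prodMk_right x).continuousAt y hy
  obtain ⟨u, hu, hmin⟩ := exists_min_on_compact hGx hK hne m (fun v => hm (x, v))
  exact ⟨u, hu, le_antisymm (ciInf_le hbdd ⟨u, hu⟩) (le_ciInf fun v => hmin v v.2), hmin⟩

end Stmt15Aux

namespace Stmt15Aux

lemma exists_measurable_selector {S A : Type*}
    [MetricSpace S] [MeasurableSpace S] [BorelSpace S]
    [MetricSpace A] [CompactSpace A] [Nonempty A] [MeasurableSpace A] [BorelSpace A]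
    {G : S × A → ℝ} (hG : LowerSemicontinuous G) (m : ℝ) (hm : ∀ q, m ≤ G q) :
    ∃ μ : S → A, Measurable μ ∧ ∀ x, G (x, μ x) = ⨅ u : A, G (x, u) := by
  classical
  have hGx : ∀ x : S, LowerSemicontinuous fun u : A => G (x, u) := fun x u y hy =>
    LowerSemicontinuousAt.comp (f := G) (hG (x, u))
      (Continuous.prodMk_right x).continuousAt y hy
  set mfull : S → ℝ := fun x => ⨅ u : A, G (x, u) with hmfull
  have hbddA : ∀ x, BddBelow (Set.range fun u : A => G (x, u)) := fun x =>
    ⟨m, by rintro _ ⟨u, rfl⟩; exact hm _⟩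
  have hbddK : ∀ (x : S) (K : Set A), BddBelow (Set.range fun u : K => G (x, u)) := fun x K =>
    ⟨m, by rintro _ ⟨u, rfl⟩; exact hm _⟩
  have huniv : (Set.univ : Set A).Nonempty := ⟨Classical.arbitrary A, trivial⟩
  have hbridge : ∀ x, mfull x = ⨅ u : (Set.univ : Set A), G (x, u) := by
    intro x
    have : Nonempty (Set.univ : Set A) := huniv.to_subtype
    exact le_antisymm (le_ciInf fun u => ciInf_le (hbddA x) u.1)
      (le_ciInf fun u => ciInf_le (hbddK x _) ⟨u, Set.mem_univ u⟩)
  have hmfull_lsc : LowerSemicontinuous mfull := by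
    have h := lsc_inf_compact hG m hm (K := Set.univ) isCompact_univ huniv
    rw [show mfull = fun x => ⨅ u : (Set.univ : Set A), G (x, u) from funext hbridge]
    exact h
  have hmfull_meas : Measurable mfull := hmfull_lsc.measurable
  set Msel : S → Set A := fun x => {u | G (x, u) ≤ mfull x} with hMsel
  have hMne : ∀ x, (Msel x).Nonempty := by
    intro x
    obtain ⟨u, -, hequ, -⟩ := exists_attains_inf_compact hG m hm isCompact_univ huniv x
    refine ⟨u, ?_⟩
    show G (x, u) ≤ mfull x
    rw [hbridge x]
    exact le_of_eq hequ.symm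
  have hMcl : ∀ x, IsClosed (Msel x) := fun x => isClosed_sublevel (hGx x) _
  have hhit : ∀ K : Set A, IsCompact K → MeasurableSet {x | (Msel x ∩ K).Nonempty} := by
    intro K hK
    rcases K.eq_empty_or_nonempty with rfl | hne
    · simp
    · have : Nonempty K := hne.to_subtype
      have hgK : LowerSemicontinuous fun x => ⨅ u : K, G (x, u) :=
        lsc_inf_compact hG m hm hK hne
      have hset : {x | (Msel x ∩ K).Nonempty} = {x | (⨅ u : K, G (x, u)) ≤ mfull x} := by
        ext x
        simp only [Set.mem_setOf_eq]
        constructor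
        · rintro ⟨u, hu1, hu2⟩
          exact le_trans (ciInf_le (hbddK x K) ⟨u, hu2⟩) hu1
        · intro hle
          obtain ⟨u, hu, hequ, -⟩ := exists_attains_inf_compact hG m hm hK hne x
          exact ⟨u, show G (x, u) ≤ mfull x from hequ ▸ hle, hu⟩
      rw [hset]
      exact measurableSet_le hgK.measurable hmfull_meas
  -- dense sequence and recursive construction
  set a : ℕ → A := TopologicalSpace.denseSeq A with ha
  have hdense : DenseRange a := TopologicalSpace.denseRange_denseSeq A
  set r : ℕ → ℝ := fun n => (1/2 : ℝ)^n with hr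
  have hrpos : ∀ n, 0 < r n := fun n => by rw [hr]; positivity
  set pick : S → Set A → ℕ → ℕ := fun x C n =>
    sInf {j | (Msel x ∩ C ∩ Metric.closedBall (a j) (r n)).Nonempty} with hpickdef
  set Cs : ℕ → S → Set A := fun n => Nat.rec (motive := fun _ => S → Set A) (fun _ => Set.univ)
      (fun k Ck x => Ck x ∩ Metric.closedBall (a (pick x (Ck x) k)) (r k)) n with hCsdef
  set idx : ℕ → S → ℕ := fun n x => pick x (Cs n x) n with hidxdef
  have hCs0 : ∀ x, Cs 0 x = Set.univ := fun _ => rfl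
  have hCsS : ∀ n x, Cs (n+1) x = Cs n x ∩ Metric.closedBall (a (idx n x)) (r n) :=
    fun _ _ => rfl
  have hInv : ∀ x n, (Msel x ∩ Cs n x).Nonempty := by
    intro x n; induction n with
    | zero =>
      obtain ⟨u, hu⟩ := hMne x
      exact ⟨u, hu, by rw [hCs0]; trivial⟩
    | succ k ih =>
      have hJ : {j | (Msel x ∩ Cs k x ∩ Metric.closedBall (a j) (r k)).Nonempty}.Nonempty := by
        obtain ⟨q, hq⟩ := ih
        obtain ⟨j, hj⟩ := (Metric.denseRange_iff.1 hdense) q (r k) (hrpos k)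
        exact ⟨j, ⟨q, hq, Metric.mem_closedBall.2 (le_of_lt hj)⟩⟩
      have hmem : (Msel x ∩ Cs k x ∩ Metric.closedBall (a (idx k x)) (r k)).Nonempty :=
        Nat.sInf_mem hJ
      obtain ⟨q, hq⟩ := hmem
      exact ⟨q, hq.1.1, by rw [hCsS]; exact ⟨hq.1.2, hq.2⟩⟩
  set μn : ℕ → S → A := fun n x => a (idx n x) with hμndef
  have hq' : ∀ x n, ∃ q, q ∈ Msel x ∧ q ∈ Cs (n+1) x := fun x n => by
    obtain ⟨q, hq⟩ := hInv x (n+1); exact ⟨q, hq.1, hq.2⟩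
  have hCsball : ∀ n x, Cs (n+1) x ⊆ Metric.closedBall (a (idx n x)) (r n) := by
    intro n x; rw [hCsS]; exact Set.inter_subset_right
  have hcauchy : ∀ x, CauchySeq fun n => μn n x := by
    intro x
    refine cauchySeq_of_le_geometric (1/2) 2 (by norm_num) fun n => ?_
    obtain ⟨q, hqM, hqC⟩ := hq' x (n+1)
    have h1 : q ∈ Metric.closedBall (a (idx (n+1) x)) (r (n+1)) := hCsball (n+1) x hqC
    have h2 : q ∈ Metric.closedBall (a (idx n x)) (r n) := by
      refine hCsball n x ?_
      rw [hCsS (n+1)] at hqC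
      exact hqC.1
    have e1 : dist q (μn n x) ≤ r n := Metric.mem_closedBall.1 h2
    have e2 : dist q (μn (n+1) x) ≤ r (n+1) := Metric.mem_closedBall.1 h1
    have hrr : r (n+1) ≤ r n := by
      rw [hr]
      refine pow_le_pow_of_le_one (by norm_num) (by norm_num) (by omega)
    calc dist (μn n x) (μn (n+1) x)
        ≤ dist (μn n x) q + dist q (μn (n+1) x) := dist_triangle _ _ _
      _ ≤ r n + r (n+1) := by rw [dist_comm (μn n x) q]; exact add_le_add e1 e2
      _ ≤ 2 * (1/2)^n := by
          have : r n = (1/2:ℝ)^n := by rw [hr]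
          linarith [hrr, this]
  have hlim : ∀ x, ∃ l, Filter.Tendsto (fun n => μn n x) Filter.atTop (𝓝 l) := fun x =>
    cauchySeq_tendsto_of_complete (hcauchy x)
  choose μsel hμsel using hlim
  have hμselM : ∀ x, μsel x ∈ Msel x := by
    intro x
    choose q hqM hqC using fun n => hq' x n
    have hqdist : ∀ n, dist (q n) (μn n x) ≤ r n := fun n =>
      Metric.mem_closedBall.1 (hCsball n x (hqC n))
    have hqtend : Filter.Tendsto q Filter.atTop (𝓝 (μsel x)) := by
      rw [tendsto_iff_dist_tendsto_zero]
      have hb : ∀ n, dist (q n) (μsel x) ≤ r n + dist (μn n x) (μsel x) := fun n =>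
        (dist_triangle (q n) (μn n x) (μsel x)).trans (add_le_add_left (hqdist n) _)
      have h0 : Filter.Tendsto (fun n => r n + dist (μn n x) (μsel x)) Filter.atTop (𝓝 0) := by
        have h1 : Filter.Tendsto r Filter.atTop (𝓝 0) := by
          rw [hr]
          exact tendsto_pow_atTop_nhds_zero_of_lt_one (by norm_num) (by norm_num)
        have h2 : Filter.Tendsto (fun n => dist (μn n x) (μsel x)) Filter.atTop (𝓝 0) :=
          tendsto_iff_dist_tendsto_zero.1 (hμsel x)
        simpa using h1.add h2
      exact squeeze_zero (fun n => dist_nonneg) hb h0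
    exact (hMcl x).mem_of_tendsto hqtend (Filter.Eventually.of_forall hqM)
  -- measurability
  set KK : ℕ → (ℕ → ℕ) → Set A := fun n => Nat.rec (motive := fun _ => (ℕ → ℕ) → Set A)
      (fun _ => Set.univ) (fun k Kk j => Kk j ∩ Metric.closedBall (a (j k)) (r k)) n with hKKdef
  have hKK0 : ∀ j, KK 0 j = Set.univ := fun _ => rfl
  have hKKS : ∀ n j, KK (n+1) j = KK n j ∩ Metric.closedBall (a (j n)) (r n) := fun _ _ => rfl
  have hKKcl : ∀ n j, IsClosed (KK n j) := by
    intro n j; induction n with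
    | zero => exact isClosed_univ
    | succ k ih => rw [hKKS]; exact ih.inter Metric.isClosed_closedBall
  have hKKcomp : ∀ n j, IsCompact (KK n j) := fun n j => (hKKcl n j).isCompact
  have hKKcongr : ∀ n (j j' : ℕ → ℕ), (∀ k < n, j k = j' k) → KK n j = KK n j' := by
    intro n; induction n with
    | zero => intro j j' _; rw [hKK0, hKK0]
    | succ k ih =>
      intro j j' h
      rw [hKKS, hKKS, ih j j' (fun i hi => h i (Nat.lt_succ_of_lt hi)), h k (Nat.lt_succ_self k)]
  have hCsK : ∀ n x, Cs n x = KK n (fun k => idx k x) := by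
    intro n x; induction n with
    | zero => rw [hCs0, hKK0]
    | succ k ih => rw [hCsS, hKKS, ih]
  have hpickset : ∀ (K : Set A), IsCompact K → ∀ n i, MeasurableSet {x | pick x K n = i} := by
    intro K hK n i
    set Q : ℕ → Set S := fun j =>
      {x | (Msel x ∩ K ∩ Metric.closedBall (a j) (r n)).Nonempty} with hQdef
    have hQm : ∀ j, MeasurableSet (Q j) := by
      intro j
      have hQeq : Q j = {x | (Msel x ∩ (K ∩ Metric.closedBall (a j) (r n))).Nonempty} := by
        simp only [hQdef, Set.inter_assoc]
      rw [hQeq]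
      exact hhit _ (hK.inter_right Metric.isClosed_closedBall)
    have hmemT : ∀ (x : S) (j : ℕ),
        (j ∈ {j | (Msel x ∩ K ∩ Metric.closedBall (a j) (r n)).Nonempty}) ↔ x ∈ Q j := by
      intro x j; rfl
    by_cases hi : i = 0
    · subst hi
      have hrw : {x | pick x K n = 0} = Q 0 ∪ ⋂ j, (Q j)ᶜ := by
        ext x
        simp only [Set.mem_setOf_eq, Set.mem_union, Set.mem_iInter, Set.mem_compl_iff]
        constructor
        · intro h
          rcases Nat.sInf_eq_zero.1 h with h0 | hempty
          · exact Or.inl ((hmemT x 0).1 h0)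
          · refine Or.inr fun j hj => ?_
            have : j ∈ {j | (Msel x ∩ K ∩ Metric.closedBall (a j) (r n)).Nonempty} :=
              (hmemT x j).2 hj
            rw [hempty] at this
            exact this
        · rintro (h | h)
          · exact Nat.sInf_eq_zero.2 (Or.inl ((hmemT x 0).2 h))
          · refine Nat.sInf_eq_zero.2 (Or.inr ?_)
            rw [Set.eq_empty_iff_forall_notMem]
            intro j hj
            exact h j ((hmemT x j).1 hj)
      rw [hrw]
      exact (hQm 0).union (MeasurableSet.iInter fun j => (hQm j).compl)
    · have hrw : {x | pick x K n = i} = Q i ∩ ⋂ (k : ℕ) (_ : k < i), (Q k)ᶜ := by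
        ext x
        simp only [Set.mem_setOf_eq, Set.mem_inter_iff, Set.mem_iInter, Set.mem_compl_iff]
        constructor
        · intro h
          have hTne : {j | (Msel x ∩ K ∩ Metric.closedBall (a j) (r n)).Nonempty}.Nonempty := by
            by_contra hc
            rw [Set.not_nonempty_iff_eq_empty] at hc
            exact hi (h ▸ (Nat.sInf_eq_zero.2 (Or.inr hc)))
          constructor
          · exact (hmemT x i).1 (h ▸ Nat.sInf_mem hTne)
          · intro k hk
            intro hkQ
            have hks : k < pick x K n := h.symm ▸ hk
            exact Nat.notMem_of_lt_sInf hks ((hmemT x k).2 hkQ)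
        · rintro ⟨hQi, hlt⟩
          have h1 : sInf {j | (Msel x ∩ K ∩ Metric.closedBall (a j) (r n)).Nonempty} ≤ i :=
            Nat.sInf_le ((hmemT x i).2 hQi)
          rcases lt_or_eq_of_le h1 with h2 | h2
          · exfalso
            have := Nat.sInf_mem (⟨i, (hmemT x i).2 hQi⟩ :
              {j | (Msel x ∩ K ∩ Metric.closedBall (a j) (r n)).Nonempty}.Nonempty)
            exact hlt _ h2 ((hmemT x _).1 this)
          · exact h2
      rw [hrw]
      exact (hQm i).inter
        (MeasurableSet.iInter fun k => MeasurableSet.iInter fun _ => (hQm k).compl)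
  have hEn : ∀ n (j : ℕ → ℕ), MeasurableSet {x | ∀ k < n, idx k x = j k} := by
    intro n
    induction n with
    | zero =>
      intro j
      have : {x : S | ∀ k < 0, idx k x = j k} = Set.univ := by
        ext x; simp
      rw [this]; exact MeasurableSet.univ
    | succ nn ih =>
      intro j
      have hagree : ∀ x, (∀ k < nn, idx k x = j k) → idx nn x = pick x (KK nn j) nn := by
        intro x hx
        have hc : Cs nn x = KK nn j := by
          rw [hCsK nn x]
          exact hKKcongr nn _ j hx
        show pick x (Cs nn x) nn = pick x (KK nn j) nn
        rw [hc]
      have hsplit : {x | ∀ k < nn + 1, idx k x = j k} =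
          {x | ∀ k < nn, idx k x = j k} ∩ {x | pick x (KK nn j) nn = j nn} := by
        ext x
        simp only [Set.mem_setOf_eq, Set.mem_inter_iff]
        constructor
        · intro h
          have h1 : ∀ k < nn, idx k x = j k := fun k hk => h k (Nat.lt_succ_of_lt hk)
          exact ⟨h1, (hagree x h1).symm.trans (h nn (Nat.lt_succ_self nn))⟩
        · rintro ⟨h1, h2⟩
          intro k hk
          rcases Nat.lt_succ_iff_lt_or_eq.1 hk with hk' | hk'
          · exact h1 k hk'
          · subst hk'
            exact (hagree x h1).trans h2
      rw [hsplit]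
      exact (ih j).inter (hpickset _ (hKKcomp nn j) nn (j nn))
  have hidxm : ∀ n, Measurable (idx n) := by
    intro n
    refine measurable_to_countable' fun i => ?_
    set ej : (Fin n → ℕ) → ℕ → ℕ := fun v k => if h : k < n then v ⟨k, h⟩ else 0 with hejdef
    have hrw : idx n ⁻¹' {i} = ⋃ v : Fin n → ℕ,
        ({x | ∀ k < n, idx k x = ej v k} ∩ {x | pick x (KK n (ej v)) n = i}) := by
      ext x
      simp only [Set.mem_preimage, Set.mem_singleton_iff, Set.mem_iUnion, Set.mem_inter_iff,
        Set.mem_setOf_eq]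
      constructor
      · intro hx
        refine ⟨fun k => idx k x, fun k hk => ?_, ?_⟩
        · simp only [hejdef]
          rw [dif_pos hk]
        · have hc : Cs n x = KK n (ej (fun k : Fin n => idx (↑k) x)) := by
            rw [hCsK n x]
            refine hKKcongr n _ _ fun k hk => ?_
            simp only [hejdef]
            rw [dif_pos hk]
          show pick x (KK n (ej fun k : Fin n => idx (↑k) x)) n = i
          rw [← hc]
          exact hx
      · rintro ⟨v, hv, hpickv⟩
        have hc : Cs n x = KK n (ej v) := by
          rw [hCsK n x]
          exact hKKcongr n _ _ fun k hk => hv k hk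
        show pick x (Cs n x) n = i
        rw [hc]
        exact hpickv
    rw [hrw]
    exact MeasurableSet.iUnion fun v =>
      (hEn n (ej v)).inter (hpickset _ (hKKcomp n (ej v)) n i)
  have hμnm : ∀ n, Measurable (μn n) := fun n =>
    (measurable_from_top (f := a)).comp (hidxm n)
  have hμselm : Measurable μsel :=
    measurable_of_tendsto_metrizable hμnm (tendsto_pi_nhds.2 hμsel)
  exact ⟨μsel, hμselm, fun x => le_antisymm (hμselM x) (ciInf_le (hbddA x) (μsel x))⟩

end Stmt15Aux

namespace Stmt15Aux

lemma lsc_comp_continuous {X Y : Type*} [TopologicalSpace X] [TopologicalSpace Y]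
    {f : Y → ℝ} (hf : LowerSemicontinuous f) {g : X → Y} (hg : Continuous g) :
    LowerSemicontinuous fun x => f (g x) := fun x y hy =>
  LowerSemicontinuousAt.comp (f := f) (hf (g x)) hg.continuousAt y hy

lemma lsc_inf_full {S A : Type*} [TopologicalSpace S] [TopologicalSpace A] [T2Space A]
    [CompactSpace A] [Nonempty A] {G : S × A → ℝ} (hG : LowerSemicontinuous G)
    (m : ℝ) (hm : ∀ q, m ≤ G q) :
    LowerSemicontinuous (fun x => ⨅ u : A, G (x, u)) := by
  have huniv : (Set.univ : Set A).Nonempty := ⟨Classical.arbitrary A, trivial⟩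
  have hbddA : ∀ x : S, BddBelow (Set.range fun u : A => G (x, u)) := fun x =>
    ⟨m, by rintro _ ⟨u, rfl⟩; exact hm _⟩
  have hbddK : ∀ x : S, BddBelow (Set.range fun u : (Set.univ : Set A) => G (x, u)) := fun x =>
    ⟨m, by rintro _ ⟨u, rfl⟩; exact hm _⟩
  have : Nonempty (Set.univ : Set A) := huniv.to_subtype
  have hbridge : (fun x : S => ⨅ u : A, G (x, u))
      = fun x => ⨅ u : (Set.univ : Set A), G (x, u) :=
    funext fun x => le_antisymm (le_ciInf fun u => ciInf_le (hbddA x) u.1)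
      (le_ciInf fun u => ciInf_le (hbddK x) ⟨u, Set.mem_univ u⟩)
  rw [hbridge]
  exact lsc_inf_compact hG m hm isCompact_univ huniv

lemma step_G {S A : Type*} {d : ℕ} [MetricSpace S] [MeasurableSpace S] [BorelSpace S]
    [MetricSpace A] [CompactSpace A] [MeasurableSpace A] [BorelSpace A]
    (f : S × A × (Fin d → ℝ) → S) (hf : Continuous f)
    (c : S × A → ℝ) (hc : LowerSemicontinuous c) (cL cU : ℝ) (hcbd : ∀ z, cL ≤ c z ∧ c z ≤ cU)
    (p : S × A → ProbabilityMeasure (Fin d → ℝ)) (hp : Continuous p)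
    (θ : ℝ) (hθ : θ < 0)
    (W : S → ℝ) (hW : LowerSemicontinuous W) (bL bU : ℝ) (hWbd : ∀ x, bL ≤ W x ∧ W x ≤ bU) :
    LowerSemicontinuous (fun z : S × A => c z + (-2/θ) * Real.log
      (∫ w, Real.exp ((-θ/2) * W (f (z.1, z.2, w))) ∂(p z : Measure (Fin d → ℝ))))
    ∧ ∀ z : S × A, c z + (-2/θ) * Real.log
      (∫ w, Real.exp ((-θ/2) * W (f (z.1, z.2, w))) ∂(p z : Measure (Fin d → ℝ))) ∈
      Set.Icc (cL + bL) (cU + bU) := by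
  have hαpos : 0 < -θ/2 := by linarith
  have hkpos : 0 < -2/θ := by
    apply div_pos_of_neg_of_neg <;> linarith
  set g : (S × A) × (Fin d → ℝ) → ℝ :=
    fun q => Real.exp ((-θ/2) * W (f (q.1.1, q.1.2, q.2))) with hg
  set e1 : ℝ := Real.exp ((-θ/2) * bL) with he1
  set e2 : ℝ := Real.exp ((-θ/2) * bU) with he2
  have hproj : Continuous fun q : (S × A) × (Fin d → ℝ) => (q.1.1, q.1.2, q.2) :=
    (continuous_fst.fst).prodMk ((continuous_fst.snd).prodMk continuous_snd)
  have hWf : LowerSemicontinuous fun q : (S × A) × (Fin d → ℝ) => W (f (q.1.1, q.1.2, q.2)) :=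
    lsc_comp_continuous hW (hf.comp hproj)
  have hexp_mono : Monotone fun v : ℝ => Real.exp ((-θ/2) * v) := fun v₁ v₂ h =>
    Real.exp_le_exp.2 (mul_le_mul_of_nonneg_left h hαpos.le)
  have hexp_cont : Continuous fun v : ℝ => Real.exp (-θ / 2 * v) :=
    Real.continuous_exp.comp (continuous_const.mul continuous_id)
  have hg_lsc : LowerSemicontinuous g :=
    Continuous.comp_lowerSemicontinuous (g := fun v : ℝ => Real.exp (-θ / 2 * v))
      hexp_cont hWf hexp_mono
  have hgbd : ∀ q, g q ∈ Set.Icc e1 e2 := fun q =>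
    ⟨hexp_mono (hWbd _).1, hexp_mono (hWbd _).2⟩
  have hgm : ∀ z : S × A, Measurable fun w => g (z, w) := by
    intro z
    have h1 : Measurable fun w : Fin d → ℝ => (z.1, z.2, w) :=
      measurable_const.prodMk (measurable_const.prodMk measurable_id)
    exact Real.measurable_exp.comp
      (measurable_const.mul (hW.measurable.comp (hf.measurable.comp h1)))
  set H : S × A → ℝ := fun z => ∫ w, g (z, w) ∂(p z : Measure (Fin d → ℝ)) with hH
  have hint : ∀ z, Integrable (fun w => g (z, w)) (p z : Measure (Fin d → ℝ)) := by
    intro z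
    refine Integrable.mono' (integrable_const e2) ((hgm z).aestronglyMeasurable)
      (ae_of_all _ fun w => ?_)
    rw [Real.norm_eq_abs, abs_of_pos (Real.exp_pos _)]
    exact (hgbd (z, w)).2
  have hHlb : ∀ z, e1 ≤ H z := by
    intro z
    calc e1 = ∫ _, e1 ∂(p z : Measure (Fin d → ℝ)) := by simp
      _ ≤ ∫ w, g (z, w) ∂(p z : Measure (Fin d → ℝ)) :=
        integral_mono (integrable_const e1) (hint z) fun w => (hgbd (z, w)).1
  have hHub : ∀ z, H z ≤ e2 := by
    intro z
    calc H z ≤ ∫ _, e2 ∂(p z : Measure (Fin d → ℝ)) :=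
        integral_mono (hint z) (integrable_const e2) fun w => (hgbd (z, w)).2
      _ = e2 := by simp
  have hHpos : ∀ z, 0 < H z := fun z => lt_of_lt_of_le (Real.exp_pos _) (hHlb z)
  have hHlsc : LowerSemicontinuous H := lsc_integral p hp g hg_lsc hgbd hgm
  have hloglsc : LowerSemicontinuous fun z => Real.log (H z) := by
    intro z₀ y hy
    have h1 : Real.exp y < H z₀ := (Real.lt_log_iff_exp_lt (hHpos z₀)).1 hy
    filter_upwards [hHlsc z₀ (Real.exp y) h1] with z hz
    exact (Real.lt_log_iff_exp_lt (hHpos z)).2 hz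
  have hmul : LowerSemicontinuous fun z => (-2/θ) * Real.log (H z) := by
    intro z₀ y hy
    have h1 : y / (-2/θ) < Real.log (H z₀) := (div_lt_iff₀' hkpos).2 hy
    filter_upwards [hloglsc z₀ _ h1] with z hz
    exact (div_lt_iff₀' hkpos).1 hz
  have hlsc : LowerSemicontinuous fun z : S × A => c z + (-2/θ) * Real.log (H z) :=
    hc.add hmul
  have hθ' : θ ≠ 0 := ne_of_lt hθ
  have hk1 : (-2/θ) * Real.log e1 = bL := by
    rw [he1, Real.log_exp]
    field_simp
  have hk2 : (-2/θ) * Real.log e2 = bU := by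
    rw [he2, Real.log_exp]
    field_simp
  refine ⟨hlsc, fun z => ⟨?_, ?_⟩⟩
  · have h1 : Real.log e1 ≤ Real.log (H z) := Real.log_le_log (Real.exp_pos _) (hHlb z)
    have h2 : (-2/θ) * Real.log e1 ≤ (-2/θ) * Real.log (H z) :=
      mul_le_mul_of_nonneg_left h1 hkpos.le
    have := (hcbd z).1
    rw [hk1] at h2
    linarith
  · have h1 : Real.log (H z) ≤ Real.log e2 := Real.log_le_log (hHpos z) (hHub z)
    have h2 : (-2/θ) * Real.log (H z) ≤ (-2/θ) * Real.log e2 :=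
      mul_le_mul_of_nonneg_left h1 hkpos.le
    have := (hcbd z).2
    rw [hk2] at h2
    linarith

end Stmt15Aux


/-- Finite-horizon risk-averse MDP: the value functions defined by the
backward exponential-utility recursion are lsc and bounded at every time,
and Borel-measurable minimizing policy maps exist at every time `t < N`. -/
theorem stmt15 {S A : Type*} (d N : ℕ)
    [MetricSpace S] [MeasurableSpace S] [BorelSpace S]
    [MetricSpace A] [CompactSpace A] [Nonempty A] [MeasurableSpace A] [BorelSpace A]
    (f : ℕ → S × A × (Fin d → ℝ) → S) (hf : ∀ t, Continuous (f t))
    (c : ℕ → S × A → ℝ) (hc : ∀ t, LowerSemicontinuous (c t))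
    (cN : S → ℝ) (hcN : LowerSemicontinuous cN)
    (cL cU : ℝ) (hcbd : ∀ t, ∀ z, cL ≤ c t z ∧ c t z ≤ cU)
    (hcNbd : ∀ x, cL ≤ cN x ∧ cN x ≤ cU)
    (p : ℕ → S × A → ProbabilityMeasure (Fin d → ℝ)) (hp : ∀ t, Continuous (p t))
    (θ : ℝ) (hθ : θ < 0)
    (V : ℕ → S → ℝ)
    (hVN : ∀ x, V N x = cN x)
    (hVrec : ∀ t < N, ∀ x, V t x = ⨅ u : A,
      (c t (x, u) + (-2 / θ) * Real.log
        (∫ w, Real.exp ((-θ / 2) * V (t + 1) (f t (x, u, w)))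
          ∂(p t (x, u) : Measure (Fin d → ℝ))))) :
    (∀ t ≤ N, LowerSemicontinuous (V t) ∧ ∃ bL bU : ℝ, ∀ x, V t x ∈ Set.Icc bL bU) ∧
    (∀ t < N, ∃ μ : S → A, Measurable μ ∧ ∀ x, V t x =
      c t (x, μ x) + (-2 / θ) * Real.log
        (∫ w, Real.exp ((-θ / 2) * V (t + 1) (f t (x, μ x, w)))
          ∂(p t (x, μ x) : Measure (Fin d → ℝ)))) := by
  classical
  have key : ∀ k t, t + k = N →
      LowerSemicontinuous (V t) ∧ ∃ bL bU : ℝ, ∀ x, V t x ∈ Set.Icc bL bU := by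
    intro k
    induction k with
    | zero =>
      intro t ht
      have htN : t = N := by omega
      subst htN
      rw [show V t = cN from funext hVN]
      exact ⟨hcN, cL, cU, fun x => ⟨(hcNbd x).1, (hcNbd x).2⟩⟩
    | succ k ih =>
      intro t ht
      have ht1 : (t + 1) + k = N := by omega
      have htN : t < N := by omega
      obtain ⟨hWlsc, bL, bU, hWbd⟩ := ih (t + 1) ht1
      obtain ⟨hGlsc, hGbd⟩ := Stmt15Aux.step_G (f t) (hf t) (c t) (hc t) cL cU (hcbd t)
        (p t) (hp t) θ hθ (V (t + 1)) hWlsc bL bU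
        (fun x => ⟨(hWbd x).1, (hWbd x).2⟩)
      have hbddG : ∀ x : S, BddBelow (Set.range fun u : A =>
          (c t (x, u) + (-2 / θ) * Real.log
            (∫ w, Real.exp ((-θ / 2) * V (t + 1) (f t (x, u, w)))
              ∂(p t (x, u) : Measure (Fin d → ℝ))))) := by
        intro x
        refine ⟨cL + bL, ?_⟩
        rintro _ ⟨u, rfl⟩
        exact (hGbd (x, u)).1
      constructor
      · rw [show V t = fun x => ⨅ u : A,
          (c t (x, u) + (-2 / θ) * Real.log
            (∫ w, Real.exp ((-θ / 2) * V (t + 1) (f t (x, u, w)))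
              ∂(p t (x, u) : Measure (Fin d → ℝ)))) from funext (hVrec t htN)]
        exact Stmt15Aux.lsc_inf_full hGlsc (cL + bL) (fun q => (hGbd q).1)
      · refine ⟨cL + bL, cU + bU, fun x => ?_⟩
        rw [hVrec t htN x]
        constructor
        · exact le_ciInf fun u => (hGbd (x, u)).1
        · exact (ciInf_le (hbddG x) (Classical.arbitrary A)).trans
            (hGbd (x, Classical.arbitrary A)).2
  refine ⟨fun t htle => key (N - t) t (by omega), fun t htN => ?_⟩
  obtain ⟨hWlsc, bL, bU, hWbd⟩ := key (N - (t + 1)) (t + 1) (by omega)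
  obtain ⟨hGlsc, hGbd⟩ := Stmt15Aux.step_G (f t) (hf t) (c t) (hc t) cL cU (hcbd t)
    (p t) (hp t) θ hθ (V (t + 1)) hWlsc bL bU (fun x => ⟨(hWbd x).1, (hWbd x).2⟩)
  obtain ⟨μ, hμm, hμeq⟩ := Stmt15Aux.exists_measurable_selector hGlsc (cL + bL)
    (fun q => (hGbd q).1)
  refine ⟨μ, hμm, fun x => ?_⟩
  rw [hVrec t htN x]
  exact (hμeq x).symm
end

section
/- Consider the finite-horizon exponential-utility (risk-averse) control problem with θ < 0: minimize over policies π the quantity (−2/θ) log E_x^π[ exp((−θ/2) Z) ], where Z is the bounded total cost. Under the standing assumptions (compact action space, continuous dynamics and kernels, bounded lsc costs), the dynamic-programming value V_0^θ(x) computed by the backward recursion equals the optimal value: V_0^θ(x) = inf_π (−2/θ) log E_x^π[exp((−θ/2) Z)] for all x ∈ S, and the optimal value is attained by the Markov policy π_θ^* = (μ_0^θ,…,μ_{N−1}^θ) formed by the Borel-measurable minimizing selectors of the recursion. -/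
open MeasureTheory Filter Topology
open scoped ENNReal NNReal BoundedContinuousFunction

lemma aux_measurable_coe {X : Type*} [TopologicalSpace X] [MeasurableSpace X]
    [OpensMeasurableSpace X]
    {Y : Type*} [MeasurableSpace Y] [PseudoMetricSpace Y] [BorelSpace Y]
    (q : X → ProbabilityMeasure Y) (hq : Continuous q) :
    Measurable (fun x => (q x : Measure Y)) := by
  apply Measure.measurable_of_measurable_coe
  have h_closed : ∀ F : Set Y, IsClosed F → Measurable (fun x => (q x : Measure Y) F) := by
    intro F hF
    have h_tendsto : ∀ x, Tendsto (fun n => ∫⁻ y, (hF.apprSeq n y : ℝ≥0∞) ∂(q x : Measure Y))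
        atTop (𝓝 ((q x : Measure Y) F)) := fun x =>
      HasOuterApproxClosed.tendsto_lintegral_apprSeq hF (q x : Measure Y)
    refine ENNReal.measurable_of_tendsto (fun n => ?_) (tendsto_pi_nhds.mpr h_tendsto)
    have hcont : Continuous fun x => ∫⁻ y, (hF.apprSeq n y : ℝ≥0∞) ∂(q x : Measure Y) := by
      rw [continuous_iff_continuousAt]
      intro x
      exact (ProbabilityMeasure.tendsto_iff_forall_lintegral_tendsto.mp (hq.tendsto x))
        (hF.apprSeq n)
    exact hcont.measurable
  have key : ∀ ⦃E : Set Y⦄, MeasurableSet E → Measurable (fun x => (q x : Measure Y) E) := by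
    refine MeasurableSpace.induction_on_inter
      (BorelSpace.measurable_eq.trans borel_eq_generateFrom_isClosed) ?_ ?_ ?_ ?_ ?_
    · rintro s hs t ht -
      exact hs.inter ht
    · simp only [measure_empty]; exact measurable_const
    · exact fun t ht => h_closed t ht
    · intro t htm hmeas
      have : ∀ x, (q x : Measure Y) tᶜ = 1 - (q x : Measure Y) t := by
        intro x
        rw [measure_compl htm (measure_ne_top _ _), measure_univ]
      simp only [this]
      exact measurable_const.sub hmeas
    · intro g hdisj hgm hmeas
      have : ∀ x, (q x : Measure Y) (⋃ i, g i) = ∑' i, (q x : Measure Y) (g i) :=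
        fun x => measure_iUnion hdisj hgm
      simp only [this]
      exact Measurable.ennreal_tsum hmeas
  exact fun E hE => key hE

lemma aux_measurable_integral {X Y : Type*} [MeasurableSpace X] [MeasurableSpace Y]
    (q : X → ProbabilityMeasure Y) (hq : Measurable (fun x => (q x : Measure Y)))
    (G : X → Y → ℝ) (hG : Measurable (Function.uncurry G)) :
    Measurable fun x => ∫ y, G x y ∂(q x : Measure Y) := by
  let κ : ProbabilityTheory.Kernel X Y := ⟨fun x => (q x : Measure Y), hq⟩
  haveI : ProbabilityTheory.IsMarkovKernel κ := ⟨fun x => by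
    show IsProbabilityMeasure (q x : Measure Y); infer_instance⟩
  exact (MeasureTheory.StronglyMeasurable.integral_kernel_prod_right
    (κ := κ) hG.stronglyMeasurable).measurable

lemma aux_integral_bounds {Y : Type*} [MeasurableSpace Y] (ν : Measure Y) [IsProbabilityMeasure ν]
    (g : Y → ℝ) (a b : ℝ) (hg : Measurable g) (hga : ∀ y, a ≤ g y) (hgb : ∀ y, g y ≤ b) :
    Integrable g ν ∧ a ≤ ∫ y, g y ∂ν ∧ (∫ y, g y ∂ν) ≤ b := by
  have hint : Integrable g ν := by
    refine (integrable_const (max |a| |b|)).mono' hg.aestronglyMeasurable ?_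
    filter_upwards with y
    rw [Real.norm_eq_abs, abs_le]
    constructor
    · calc -(max |a| |b|) ≤ -|a| := by simp [le_max_left]
        _ ≤ a := neg_abs_le a
        _ ≤ g y := hga y
    · exact (hgb y).trans ((le_abs_self b).trans (le_max_right _ _))
  refine ⟨hint, ?_, ?_⟩
  · calc a = ∫ _, a ∂ν := by simp
      _ ≤ ∫ y, g y ∂ν := integral_mono (integrable_const a) hint hga
  · calc (∫ y, g y ∂ν) ≤ ∫ _, b ∂ν := integral_mono hint (integrable_const b) hgb
      _ = b := by simp

/-- Optimality of the risk-averse dynamic-programming value: `V_0^θ` equals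
the infimum over Markov policies of `(−2/θ) log E_x^π[exp((−θ/2)Z)]`
(the latter expressed through the backward multiplicative recursion for
`W^{π,θ}`), and the infimum is attained by the policy of measurable
minimizing selectors. -/
theorem stmt19 {S A : Type*} (d N : ℕ)
    [MetricSpace S] [MeasurableSpace S] [BorelSpace S]
    [MetricSpace A] [CompactSpace A] [Nonempty A] [MeasurableSpace A] [BorelSpace A]
    (f : ℕ → S × A × (Fin d → ℝ) → S) (hf : ∀ t, Continuous (f t))
    (c : ℕ → S × A → ℝ) (hc : ∀ t, LowerSemicontinuous (c t))
    (cN : S → ℝ) (hcN : LowerSemicontinuous cN)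
    (cL cU : ℝ) (hcbd : ∀ t z, cL ≤ c t z ∧ c t z ≤ cU)
    (hcNbd : ∀ x, cL ≤ cN x ∧ cN x ≤ cU)
    (p : ℕ → S × A → ProbabilityMeasure (Fin d → ℝ)) (hp : ∀ t, Continuous (p t))
    (θ : ℝ) (hθ : θ < 0)
    -- the dynamic-programming value functions
    (V : ℕ → S → ℝ)
    (hVN : ∀ x, V N x = cN x)
    (hVrec : ∀ t < N, ∀ x, V t x = ⨅ u : A,
      (c t (x, u) + (-2 / θ) * Real.log
        (∫ w, Real.exp ((-θ / 2) * V (t + 1) (f t (x, u, w)))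
          ∂(p t (x, u) : Measure (Fin d → ℝ)))))
    -- the measurable minimizing selectors forming `π_θ^*`
    (μstar : ℕ → S → A) (hμstar : ∀ t, Measurable (μstar t))
    (hsel : ∀ t < N, ∀ x, V t x =
      c t (x, μstar t x) + (-2 / θ) * Real.log
        (∫ w, Real.exp ((-θ / 2) * V (t + 1) (f t (x, μstar t x, w)))
          ∂(p t (x, μstar t x) : Measure (Fin d → ℝ))))
    -- the exponential cost `W_t^{π,θ}(x) = E^π[exp((−θ/2)Z_t) | X_t = x]`,
    -- characterized by its backward multiplicative recursion
    (W : (ℕ → S → A) → ℕ → S → ℝ)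
    (hWN : ∀ π : ℕ → S → A, ∀ x, W π N x = Real.exp ((-θ / 2) * cN x))
    (hWrec : ∀ π : ℕ → S → A, ∀ t < N, ∀ x, W π t x =
      Real.exp ((-θ / 2) * c t (x, π t x)) *
        ∫ w, W π (t + 1) (f t (x, π t x, w))
          ∂(p t (x, π t x) : Measure (Fin d → ℝ))) :
    ∀ x : S,
      (V 0 x = ⨅ π : {π : ℕ → S → A // ∀ t, Measurable (π t)},
        ((-2 / θ) * Real.log (W π.1 0 x))) ∧
      V 0 x = (-2 / θ) * Real.log (W μstar 0 x) := by
  have hθ0 : θ ≠ 0 := ne_of_lt hθ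
  have hpos2 : (0:ℝ) < -θ / 2 := by linarith
  have hpos : (0:ℝ) < -2 / θ := by
    have h2 : -2 / θ = 2 / (-θ) := by ring
    rw [h2]; exact div_pos (by norm_num) (by linarith)
  have hmul : ∀ r : ℝ, (-2 / θ) * (-θ / 2 * r) = r := by
    intro r; field_simp
  have hmul2 : ∀ r : ℝ, -θ / 2 * (-2 / θ * r) = r := by
    intro r; field_simp
  have hpm : ∀ t, Measurable fun z : S × A => (p t z : Measure (Fin d → ℝ)) :=
    fun t => aux_measurable_coe (p t) (hp t)
  -- measurability of the inner integrand, for fixed `x`, `u`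
  have hgm : ∀ (t : ℕ) (x : S) (u : A), Measurable (V (t + 1)) →
      Measurable fun w : Fin d → ℝ => Real.exp (-θ / 2 * V (t + 1) (f t (x, u, w))) := by
    intro t x u hVm
    have h1 : Measurable fun w : Fin d → ℝ => V (t + 1) (f t (x, u, w)) :=
      hVm.comp ((hf t).measurable.comp
        (measurable_const.prodMk (measurable_const.prodMk measurable_id)))
    exact Real.measurable_exp.comp (h1.const_mul _)
  -- integrability and bounds for the inner integral
  have hI : ∀ (t : ℕ) (x : S) (u : A) (a b : ℝ), Measurable (V (t + 1)) →
      (∀ y, a ≤ V (t + 1) y) → (∀ y, V (t + 1) y ≤ b) →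
      Integrable (fun w => Real.exp (-θ / 2 * V (t + 1) (f t (x, u, w))))
        (p t (x, u) : Measure (Fin d → ℝ)) ∧
      Real.exp (-θ / 2 * a) ≤
        (∫ w, Real.exp (-θ / 2 * V (t + 1) (f t (x, u, w)))
          ∂(p t (x, u) : Measure (Fin d → ℝ))) ∧
      (∫ w, Real.exp (-θ / 2 * V (t + 1) (f t (x, u, w)))
          ∂(p t (x, u) : Measure (Fin d → ℝ))) ≤ Real.exp (-θ / 2 * b) := by
    intro t x u a b hVm ha hb
    refine aux_integral_bounds _ _ _ _ (hgm t x u hVm) ?_ ?_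
    · intro w
      exact Real.exp_le_exp.mpr (mul_le_mul_of_nonneg_left (ha _) hpos2.le)
    · intro w
      exact Real.exp_le_exp.mpr (mul_le_mul_of_nonneg_left (hb _) hpos2.le)
  -- Claim A: measurability and boundedness of the value functions
  have hVfacts : ∀ j t, t + j = N →
      Measurable (V t) ∧ ∃ a b : ℝ, ∀ x, a ≤ V t x ∧ V t x ≤ b := by
    intro j
    induction j with
    | zero =>
      intro t ht
      have htN : t = N := by omega
      subst htN
      have hVN' : V t = cN := funext hVN
      rw [hVN']
      exact ⟨hcN.measurable, cL, cU, hcNbd⟩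
    | succ j ih =>
      intro t ht
      have htN : t < N := by omega
      obtain ⟨hVm, a, b, hab⟩ := ih (t + 1) (by omega)
      constructor
      · -- measurability of `V t`
        have hVt : V t = fun x =>
            c t (x, μstar t x) + -2 / θ * Real.log
              (∫ w, Real.exp (-θ / 2 * V (t + 1) (f t (x, μstar t x, w)))
                ∂(p t (x, μstar t x) : Measure (Fin d → ℝ))) := funext (hsel t htN)
        rw [hVt]
        have m1 : Measurable fun x : S => c t (x, μstar t x) :=
          (hc t).measurable.comp (measurable_id.prodMk (hμstar t))
        have m2 : Measurable fun x : S =>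
            ∫ w, Real.exp (-θ / 2 * V (t + 1) (f t (x, μstar t x, w)))
              ∂(p t (x, μstar t x) : Measure (Fin d → ℝ)) := by
          refine aux_measurable_integral (fun x => p t (x, μstar t x))
            ((hpm t).comp (measurable_id.prodMk (hμstar t)))
            (fun x w => Real.exp (-θ / 2 * V (t + 1) (f t (x, μstar t x, w)))) ?_
          have hmap : Measurable fun z : S × (Fin d → ℝ) => (z.1, μstar t z.1, z.2) :=
            measurable_fst.prodMk (((hμstar t).comp measurable_fst).prodMk measurable_snd)
          exact Real.measurable_exp.comp
            ((hVm.comp ((hf t).measurable.comp hmap)).const_mul _)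
        exact m1.add ((Real.measurable_log.comp m2).const_mul _)
      · refine ⟨cL + a, cU + b, fun x => ?_⟩
        obtain ⟨hint, hlo, hhi⟩ :=
          hI t x (μstar t x) a b hVm (fun y => (hab y).1) (fun y => (hab y).2)
        have hIpos : 0 < ∫ w, Real.exp (-θ / 2 * V (t + 1) (f t (x, μstar t x, w)))
            ∂(p t (x, μstar t x) : Measure (Fin d → ℝ)) :=
          lt_of_lt_of_le (Real.exp_pos _) hlo
        have hlog1 : -θ / 2 * a ≤ Real.log (∫ w,
            Real.exp (-θ / 2 * V (t + 1) (f t (x, μstar t x, w)))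
              ∂(p t (x, μstar t x) : Measure (Fin d → ℝ))) := by
          calc -θ / 2 * a = Real.log (Real.exp (-θ / 2 * a)) := (Real.log_exp _).symm
            _ ≤ _ := Real.log_le_log (Real.exp_pos _) hlo
        have hlog2 : Real.log (∫ w,
            Real.exp (-θ / 2 * V (t + 1) (f t (x, μstar t x, w)))
              ∂(p t (x, μstar t x) : Measure (Fin d → ℝ))) ≤ -θ / 2 * b := by
          calc Real.log _ ≤ Real.log (Real.exp (-θ / 2 * b)) := Real.log_le_log hIpos hhi
            _ = -θ / 2 * b := Real.log_exp _
        have h1 := mul_le_mul_of_nonneg_left hlog1 hpos.le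
        rw [hmul] at h1
        have h2 := mul_le_mul_of_nonneg_left hlog2 hpos.le
        rw [hmul] at h2
        rw [hsel t htN x]
        exact ⟨add_le_add (hcbd t _).1 h1, add_le_add (hcbd t _).2 h2⟩
  -- Claim B: along `μstar`, `W` is the exponential of the value function
  have claimB : ∀ j t, t + j = N → ∀ x, W μstar t x = Real.exp (-θ / 2 * V t x) := by
    intro j
    induction j with
    | zero =>
      intro t ht x
      have htN : t = N := by omega
      subst htN
      rw [hWN, hVN]
    | succ j ih =>
      intro t ht x
      have htN : t < N := by omega
      obtain ⟨hVm, a, b, hab⟩ := hVfacts j (t + 1) (by omega)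
      obtain ⟨hint, hlo, hhi⟩ :=
        hI t x (μstar t x) a b hVm (fun y => (hab y).1) (fun y => (hab y).2)
      have hIpos : 0 < ∫ w, Real.exp (-θ / 2 * V (t + 1) (f t (x, μstar t x, w)))
          ∂(p t (x, μstar t x) : Measure (Fin d → ℝ)) :=
        lt_of_lt_of_le (Real.exp_pos _) hlo
      have hrw : (∫ w, W μstar (t + 1) (f t (x, μstar t x, w))
            ∂(p t (x, μstar t x) : Measure (Fin d → ℝ)))
          = ∫ w, Real.exp (-θ / 2 * V (t + 1) (f t (x, μstar t x, w)))
            ∂(p t (x, μstar t x) : Measure (Fin d → ℝ)) := by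
        congr 1
        funext w
        exact ih (t + 1) (by omega) _
      rw [hWrec μstar t htN x, hrw, hsel t htN x, mul_add, Real.exp_add, hmul2,
        Real.exp_log hIpos]
  -- Claim C: for any measurable policy, `W` dominates the exponential of the value
  have claimC : ∀ (π : ℕ → S → A), (∀ s, Measurable (π s)) → ∀ j t, t + j = N →
      Measurable (W π t) ∧ (∃ bW, ∀ x, W π t x ≤ bW) ∧
      ∀ x, Real.exp (-θ / 2 * V t x) ≤ W π t x := by
    intro π hπ j
    induction j with
    | zero =>
      intro t ht
      have htN : t = N := by omega
      subst htN
      have hWt : W π t = fun x => Real.exp (-θ / 2 * cN x) := funext (hWN π)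
      rw [hWt]
      refine ⟨Real.measurable_exp.comp (hcN.measurable.const_mul _),
        ⟨Real.exp (-θ / 2 * cU), fun x =>
          Real.exp_le_exp.mpr (mul_le_mul_of_nonneg_left (hcNbd x).2 hpos2.le)⟩,
        fun x => by rw [hVN x]⟩
    | succ j ih =>
      intro t ht
      have htN : t < N := by omega
      obtain ⟨hVm, a, b, hab⟩ := hVfacts j (t + 1) (by omega)
      obtain ⟨hWm, ⟨bW, hbW⟩, hWlow⟩ := ih (t + 1) (by omega)
      have hWgm : ∀ x : S, Measurable fun w : Fin d → ℝ =>
          W π (t + 1) (f t (x, π t x, w)) := by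
        intro x
        exact hWm.comp ((hf t).measurable.comp
          (measurable_const.prodMk (measurable_const.prodMk measurable_id)))
      have hWI : ∀ x : S,
          Integrable (fun w => W π (t + 1) (f t (x, π t x, w)))
            (p t (x, π t x) : Measure (Fin d → ℝ)) ∧
          Real.exp (-θ / 2 * a) ≤ (∫ w, W π (t + 1) (f t (x, π t x, w))
            ∂(p t (x, π t x) : Measure (Fin d → ℝ))) ∧
          (∫ w, W π (t + 1) (f t (x, π t x, w))
            ∂(p t (x, π t x) : Measure (Fin d → ℝ))) ≤ max bW 0 := by
        intro x
        refine aux_integral_bounds _ _ _ _ (hWgm x) ?_ ?_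
        · intro w
          exact le_trans
            (Real.exp_le_exp.mpr (mul_le_mul_of_nonneg_left (hab _).1 hpos2.le)) (hWlow _)
        · intro w; exact le_trans (hbW _) (le_max_left _ _)
      refine ⟨?_, ?_, ?_⟩
      · -- measurability of `W π t`
        have hWt : W π t = fun x => Real.exp (-θ / 2 * c t (x, π t x)) *
            ∫ w, W π (t + 1) (f t (x, π t x, w))
              ∂(p t (x, π t x) : Measure (Fin d → ℝ)) := funext (hWrec π t htN)
        rw [hWt]
        have m1 : Measurable fun x : S => Real.exp (-θ / 2 * c t (x, π t x)) :=
          Real.measurable_exp.comp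
            (((hc t).measurable.comp (measurable_id.prodMk (hπ t))).const_mul _)
        have m2 : Measurable fun x : S =>
            ∫ w, W π (t + 1) (f t (x, π t x, w))
              ∂(p t (x, π t x) : Measure (Fin d → ℝ)) := by
          refine aux_measurable_integral (fun x => p t (x, π t x))
            ((hpm t).comp (measurable_id.prodMk (hπ t)))
            (fun x w => W π (t + 1) (f t (x, π t x, w))) ?_
          have hmap : Measurable fun z : S × (Fin d → ℝ) => (z.1, π t z.1, z.2) :=
            measurable_fst.prodMk (((hπ t).comp measurable_fst).prodMk measurable_snd)
          exact hWm.comp ((hf t).measurable.comp hmap)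
        exact m1.mul m2
      · -- upper bound for `W π t`
        refine ⟨Real.exp (-θ / 2 * cU) * max bW 0, fun x => ?_⟩
        obtain ⟨hint, hlo, hhi⟩ := hWI x
        rw [hWrec π t htN x]
        exact mul_le_mul
          (Real.exp_le_exp.mpr (mul_le_mul_of_nonneg_left (hcbd t _).2 hpos2.le))
          hhi (le_trans (Real.exp_pos _).le hlo) (Real.exp_pos _).le
      · -- lower bound: `exp((-θ/2) V t) ≤ W π t`
        intro x
        obtain ⟨hintW, hloW, _⟩ := hWI x
        obtain ⟨hintV, hloV, _⟩ :=
          hI t x (π t x) a b hVm (fun y => (hab y).1) (fun y => (hab y).2)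
        have hmono : (∫ w, Real.exp (-θ / 2 * V (t + 1) (f t (x, π t x, w)))
              ∂(p t (x, π t x) : Measure (Fin d → ℝ)))
            ≤ ∫ w, W π (t + 1) (f t (x, π t x, w))
              ∂(p t (x, π t x) : Measure (Fin d → ℝ)) :=
          integral_mono hintV hintW (fun w => hWlow _)
        have hIVpos : 0 < ∫ w, Real.exp (-θ / 2 * V (t + 1) (f t (x, π t x, w)))
            ∂(p t (x, π t x) : Measure (Fin d → ℝ)) :=
          lt_of_lt_of_le (Real.exp_pos _) hloV
        have hVle : V t x ≤ c t (x, π t x) + -2 / θ * Real.log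
            (∫ w, Real.exp (-θ / 2 * V (t + 1) (f t (x, π t x, w)))
              ∂(p t (x, π t x) : Measure (Fin d → ℝ))) := by
          rw [hVrec t htN x]
          refine ciInf_le ⟨cL + a, ?_⟩ (π t x)
          rintro r ⟨u, rfl⟩
          obtain ⟨-, hlo', -⟩ :=
            hI t x u a b hVm (fun y => (hab y).1) (fun y => (hab y).2)
          have hlog : -θ / 2 * a ≤ Real.log (∫ w,
              Real.exp (-θ / 2 * V (t + 1) (f t (x, u, w)))
                ∂(p t (x, u) : Measure (Fin d → ℝ))) := by
            calc -θ / 2 * a = Real.log (Real.exp (-θ / 2 * a)) := (Real.log_exp _).symm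
              _ ≤ _ := Real.log_le_log (Real.exp_pos _) hlo'
          have h1 := mul_le_mul_of_nonneg_left hlog hpos.le
          rw [hmul] at h1
          exact add_le_add (hcbd t _).1 h1
        calc Real.exp (-θ / 2 * V t x)
            ≤ Real.exp (-θ / 2 * (c t (x, π t x) + -2 / θ * Real.log
                (∫ w, Real.exp (-θ / 2 * V (t + 1) (f t (x, π t x, w)))
                  ∂(p t (x, π t x) : Measure (Fin d → ℝ))))) :=
              Real.exp_le_exp.mpr (mul_le_mul_of_nonneg_left hVle hpos2.le)
          _ = Real.exp (-θ / 2 * c t (x, π t x)) *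
                ∫ w, Real.exp (-θ / 2 * V (t + 1) (f t (x, π t x, w)))
                  ∂(p t (x, π t x) : Measure (Fin d → ℝ)) := by
              rw [mul_add, Real.exp_add, hmul2, Real.exp_log hIVpos]
          _ ≤ Real.exp (-θ / 2 * c t (x, π t x)) *
                ∫ w, W π (t + 1) (f t (x, π t x, w))
                  ∂(p t (x, π t x) : Measure (Fin d → ℝ)) :=
              mul_le_mul_of_nonneg_left hmono (Real.exp_pos _).le
          _ = W π t x := (hWrec π t htN x).symm
  -- conclusion
  intro x
  have h2 : V 0 x = -2 / θ * Real.log (W μstar 0 x) := by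
    rw [claimB N 0 (by omega) x, Real.log_exp, hmul]
  have hlow : ∀ π : {π : ℕ → S → A // ∀ t, Measurable (π t)},
      V 0 x ≤ -2 / θ * Real.log (W π.1 0 x) := by
    intro π
    obtain ⟨-, -, hl⟩ := claimC π.1 π.2 N 0 (by omega)
    have h0 : Real.exp (-θ / 2 * V 0 x) ≤ W π.1 0 x := hl x
    have hlog : -θ / 2 * V 0 x ≤ Real.log (W π.1 0 x) := by
      calc -θ / 2 * V 0 x = Real.log (Real.exp (-θ / 2 * V 0 x)) := (Real.log_exp _).symm
        _ ≤ _ := Real.log_le_log (Real.exp_pos _) h0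
    have h1 := mul_le_mul_of_nonneg_left hlog hpos.le
    rwa [hmul] at h1
  haveI : Nonempty {π : ℕ → S → A // ∀ t, Measurable (π t)} := ⟨⟨μstar, hμstar⟩⟩
  refine ⟨le_antisymm (le_ciInf hlow) ?_, h2⟩
  have hle : (⨅ π : {π : ℕ → S → A // ∀ t, Measurable (π t)},
      (-2 / θ) * Real.log (W π.1 0 x)) ≤ -2 / θ * Real.log (W μstar 0 x) :=
    ciInf_le (by exact ⟨V 0 x, by rintro r ⟨π, rfl⟩; exact hlow π⟩) (⟨μstar, hμstar⟩ : {π : ℕ → S → A // ∀ t, Measurable (π t)})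
  rw [← h2] at hle
  exact hle
end
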